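/- arXiv:2407.21660 — 9 statements merged into one kernel-verified Lean document; each statement's English description precedes it below -/
import Mathlib

section
/- A short exact sequence 0 → X → Y → Z → 0 of left R-modules is pure exact (i.e. remains exact after tensoring with any right R-module) if and only if the induced sequence of character modules 0 → Z^+ → Y^+ → X^+ → 0, where M^+ = Hom_ℤ(M, ℚ/ℤ), is a split exact sequence of right R-modules. -/
open TensorProduct

universe u

section BalancedTensor

variable (R : Type u) [Ring R]
variable (M : Type u) [AddCommGroup M] [Module Rᵐᵒᵖ M]
variable (N : Type u) [AddCommGroup N] [Module R N]

/-- The subgroup of relations defining the balanced tensor product `M ⊗_R N` of a right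
`R`-module `M` (i.e. a left `Rᵐᵒᵖ`-module) and a left `R`-module `N`. -/
def tensorRel : Submodule ℤ (M ⊗[ℤ] N) :=
  Submodule.span ℤ {x | ∃ (m : M) (r : R) (n : N),
    x = (MulOpposite.op r • m) ⊗ₜ[ℤ] n - m ⊗ₜ[ℤ] (r • n)}

/-- The balanced tensor product `M ⊗_R N` over a (possibly noncommutative) ring `R`. -/
abbrev BTensor := (M ⊗[ℤ] N) ⧸ tensorRel R M N

variable {R N}
variable {N' : Type u} [AddCommGroup N'] [Module R N']

/-- The map `M ⊗_R N → M ⊗_R N'` induced by a map of left `R`-modules `f : N → N'`. -/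
noncomputable def btmap (f : N →ₗ[R] N') : BTensor R M N →ₗ[ℤ] BTensor R M N' :=
  Submodule.mapQ _ _ (LinearMap.lTensor M f.toAddMonoidHom.toIntLinearMap) (by
    refine Submodule.span_le.mpr ?_
    rintro x ⟨m, r, n, rfl⟩
    show LinearMap.lTensor M f.toAddMonoidHom.toIntLinearMap
      ((MulOpposite.op r • m) ⊗ₜ[ℤ] n - m ⊗ₜ[ℤ] (r • n)) ∈ tensorRel R M N'
    simp only [map_sub, LinearMap.lTensor_tmul]
    refine Submodule.subset_span ⟨m, r, f n, ?_⟩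
    simp [map_smul])

end BalancedTensor

/-- A short exact sequence `0 → A → B → C → 0` of left `R`-modules (given by the maps
`f : A → B` and `g : B → C`) is pure if it remains exact after applying `W ⊗_R -` for
every right `R`-module `W`. -/
def TensorPure (R : Type u) [Ring R] {A B C : Type u} [AddCommGroup A] [Module R A]
    [AddCommGroup B] [Module R B] [AddCommGroup C] [Module R C]
    (f : A →ₗ[R] B) (g : B →ₗ[R] C) : Prop :=
  ∀ (W : Type u) [AddCommGroup W] [Module Rᵐᵒᵖ W],
    Function.Injective (btmap W f) ∧ Function.Exact (btmap W f) (btmap W g) ∧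
      Function.Surjective (btmap W g)

section CharacterMod

variable (R : Type u) [Ring R]
variable (A : Type u) [AddCommGroup A] [Module R A]

/-- The character module `A⁺ = Hom_ℤ(A, ℚ/ℤ)` of a left `R`-module `A` is a right
`R`-module, i.e. a left `Rᵐᵒᵖ`-module, via `(c • r) (a) = c (r • a)`. -/
noncomputable instance charModule : Module Rᵐᵒᵖ (CharacterModule A) where
  smul r c := c.comp (DistribMulAction.toAddMonoidHom A r.unop)
  one_smul c := by ext m; show c ((1 : Rᵐᵒᵖ).unop • m) = c m; simp
  mul_smul r s c := by
    ext m
    show c ((r * s).unop • m) = c (s.unop • r.unop • m)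
    rw [MulOpposite.unop_mul, mul_smul]
  smul_zero r := rfl
  smul_add r c c' := rfl
  add_smul r s c := by
    ext m
    show c ((r + s).unop • m) = c (r.unop • m) + c (s.unop • m)
    rw [MulOpposite.unop_add, add_smul, map_add]
  zero_smul c := by ext m; show c ((0 : Rᵐᵒᵖ).unop • m) = 0; simp

variable {R A}
variable {B : Type u} [AddCommGroup B] [Module R B]

/-- The dual (character) map `B⁺ → A⁺` of `f : A → B`, a map of right `R`-modules. -/
noncomputable def charDual (f : A →ₗ[R] B) :
    CharacterModule B →ₗ[Rᵐᵒᵖ] CharacterModule A where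
  toFun c := c.comp f.toAddMonoidHom
  map_add' c c' := rfl
  map_smul' r c := by ext a; exact congrArg c (f.map_smul r.unop a).symm

end CharacterMod

open CharacterModule

namespace CharacterModule

variable {M N P : Type*} [AddCommGroup M] [AddCommGroup N] [AddCommGroup P]
  {u : M →ₗ[ℤ] N} {v : N →ₗ[ℤ] P}

lemma dual_exact (h : Function.Exact u v) (hv : Function.Surjective v) :
    Function.Exact (dual v) (dual u) := by
  refine fun c ↦ ⟨fun hc ↦ ?_, ?_⟩
  · have hker : LinearMap.range u ≤ LinearMap.ker c.toIntLinearMap := by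
      rintro _ ⟨m, rfl⟩
      exact congr($hc m)
    refine ⟨((LinearMap.range u).liftQ _ hker ∘ₗ
      (h.linearEquivOfSurjective hv).symm.toLinearMap).toAddMonoidHom, ?_⟩
    ext n
    show (LinearMap.range u).liftQ _ hker ((h.linearEquivOfSurjective hv).symm (v n)) = c n
    rw [Function.Exact.linearEquivOfSurjective_symm_apply]
    rfl
  · rintro ⟨d, rfl⟩
    ext m
    exact congr(d $(h.apply_apply_eq_zero m)).trans d.map_zero

lemma exact_of_dual_exact (h : Function.Exact (dual v) (dual u)) : Function.Exact u v := by
  refine fun n ↦ ⟨fun hn ↦ ?_, ?_⟩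
  · by_contra hnu
    obtain ⟨c, hc⟩ := exists_character_apply_ne_zero_of_ne_zero
      (a := (LinearMap.range u).mkQ n) (by simpa [Submodule.Quotient.mk_eq_zero] using hnu)
    obtain ⟨d, hd⟩ := (h (c.comp (LinearMap.range u).mkQ.toAddMonoidHom)).mp <| by
      ext m
      show c ((LinearMap.range u).mkQ (u m)) = 0
      rw [Submodule.mkQ_apply, (Submodule.Quotient.mk_eq_zero _).mpr (LinearMap.mem_range_self u m),
        map_zero]
    have hdn : d (v n) = c ((LinearMap.range u).mkQ n) := congr($hd n)
    rw [hn, map_zero] at hdn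
    exact hc hdn.symm
  · rintro ⟨m, rfl⟩
    exact eq_zero_of_character_apply fun c ↦ congr($(h.apply_apply_eq_zero c) m)

end CharacterModule

namespace LinearMap

variable {S : Type*} [Ring S] {W A B C : Type*} [AddCommGroup W] [Module S W]
  [AddCommGroup A] [Module S A] [AddCommGroup B] [Module S B] [AddCommGroup C] [Module S C]
  {i : A →ₗ[S] B} {p : B →ₗ[S] C}

lemma exact_compRight_of_exact (hi : Function.Injective i) (h : Function.Exact i p) :
    Function.Exact (compRight ℤ (M := W) i) (compRight ℤ (M := W) p) := by
  refine fun φ ↦ ⟨fun hφ ↦ ?_, ?_⟩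
  · have hmem (w : W) : φ w ∈ range i := (h (φ w)).mp congr($hφ w)
    refine ⟨(LinearEquiv.ofInjective i hi).symm ∘ₗ φ.codRestrict (range i) hmem, ext fun w ↦ ?_⟩
    exact congr_arg Subtype.val ((LinearEquiv.ofInjective i hi).apply_symm_apply ⟨φ w, hmem w⟩)
  · rintro ⟨ψ, rfl⟩
    ext w
    exact h.apply_apply_eq_zero (ψ w)

lemma surjective_compRight_of_comp_eq_id {s : C →ₗ[S] B} (hs : p ∘ₗ s = id) :
    Function.Surjective (compRight ℤ (M := W) p) :=
  fun φ ↦ ⟨s ∘ₗ φ, by rw [compRight_apply, ← comp_assoc, hs, id_comp]⟩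

end LinearMap

section Adjunction

variable {R : Type u} [Ring R] {W : Type u} [AddCommGroup W] [Module Rᵐᵒᵖ W]
  {N N' : Type u} [AddCommGroup N] [Module R N] [AddCommGroup N'] [Module R N']

noncomputable def charCurry (c : CharacterModule (BTensor R W N)) :
    W →ₗ[Rᵐᵒᵖ] CharacterModule N where
  toFun w := c.comp ((tensorRel R W N).mkQ ∘ₗ TensorProduct.mk ℤ W N w).toAddMonoidHom
  map_add' w w' := by
    ext n
    show c (Submodule.Quotient.mk ((w + w') ⊗ₜ n)) =
      c (Submodule.Quotient.mk (w ⊗ₜ n)) + c (Submodule.Quotient.mk (w' ⊗ₜ n))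
    rw [TensorProduct.add_tmul, Submodule.Quotient.mk_add, map_add]
  map_smul' r w := by
    ext n
    exact congr_arg c ((Submodule.Quotient.eq _).mpr (Submodule.subset_span ⟨w, r.unop, n, rfl⟩))

noncomputable def charUncurry (ψ : W →ₗ[Rᵐᵒᵖ] CharacterModule N) :
    CharacterModule (BTensor R W N) :=
  ((tensorRel R W N).liftQ
    (TensorProduct.liftAddHom (ψ.toAddMonoidHom : W →+ N →+ AddCircle (1 : ℚ))
      fun k w n ↦ by
        show ψ (k • w) n = ψ w (k • n)
        rw [map_zsmul, map_zsmul]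
        rfl).toIntLinearMap
    (Submodule.span_le.mpr <| by
      rintro _ ⟨w, r, n, rfl⟩
      refine LinearMap.mem_ker.mpr ((map_sub _ _ _).trans ?_)
      show ψ (MulOpposite.op r • w) n - ψ w (r • n) = 0
      rw [ψ.map_smul]
      exact sub_self _)).toAddMonoidHom

noncomputable def charHomEquiv :
    CharacterModule (BTensor R W N) ≃+ (W →ₗ[Rᵐᵒᵖ] CharacterModule N) where
  toFun := charCurry
  invFun := charUncurry
  left_inv c := by
    ext x
    obtain ⟨t, rfl⟩ := Submodule.Quotient.mk_surjective _ x
    induction t with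
    | zero => rw [Submodule.Quotient.mk_zero, map_zero, map_zero]
    | tmul w n => rfl
    | add a b ha hb => rw [Submodule.Quotient.mk_add, map_add, map_add, ha, hb]
  right_inv _ := rfl
  map_add' _ _ := rfl

lemma compRight_charDual_comp_charHomEquiv (h : N →ₗ[R] N') :
    LinearMap.compRight ℤ (M := W) (charDual h) ∘ charHomEquiv =
      charHomEquiv ∘ dual (btmap W h) :=
  rfl

end Adjunction

section Purity

variable {R : Type u} [Ring R] (W : Type u) [AddCommGroup W] [Module Rᵐᵒᵖ W]
  {X Y Z : Type u} [AddCommGroup X] [Module R X] [AddCommGroup Y] [Module R Y]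
  [AddCommGroup Z] [Module R Z] (f : X →ₗ[R] Y) (g : Y →ₗ[R] Z)

lemma injective_btmap_iff :
    Function.Injective (btmap W f) ↔
      Function.Surjective (LinearMap.compRight ℤ (M := W) (charDual f)) := by
  rw [← dual_surjective_iff_injective, ← EquivLike.comp_surjective _ charHomEquiv,
    ← compRight_charDual_comp_charHomEquiv, EquivLike.surjective_comp]

lemma surjective_btmap_iff :
    Function.Surjective (btmap W g) ↔
      Function.Injective (LinearMap.compRight ℤ (M := W) (charDual g)) := by
  rw [← dual_injective_iff_surjective, ← EquivLike.comp_injective _ charHomEquiv,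
    ← compRight_charDual_comp_charHomEquiv, EquivLike.injective_comp]

lemma exact_btmap_iff (hg : Function.Surjective (btmap W g)) :
    Function.Exact (btmap W f) (btmap W g) ↔
      Function.Exact (LinearMap.compRight ℤ (M := W) (charDual g))
        (LinearMap.compRight ℤ (M := W) (charDual f)) := by
  have ladder := Function.Exact.iff_of_ladder_addEquiv
    (f₁₂ := (dual (btmap W g)).toAddMonoidHom) (f₂₃ := (dual (btmap W f)).toAddMonoidHom)
    (g₁₂ := (LinearMap.compRight ℤ (M := W) (charDual g)).toAddMonoidHom)
    (g₂₃ := (LinearMap.compRight ℤ (M := W) (charDual f)).toAddMonoidHom)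
    charHomEquiv charHomEquiv charHomEquiv
    (AddMonoidHom.ext (congr_fun (compRight_charDual_comp_charHomEquiv g)))
    (AddMonoidHom.ext (congr_fun (compRight_charDual_comp_charHomEquiv f)))
  exact ⟨fun h ↦ ladder.mpr (dual_exact h hg), fun h ↦ exact_of_dual_exact (ladder.mp h)⟩

lemma tensorPure_iff_forall_exact_compRight :
    TensorPure R f g ↔ ∀ (W : Type u) [AddCommGroup W] [Module Rᵐᵒᵖ W],
      Function.Injective (LinearMap.compRight ℤ (M := W) (charDual g)) ∧
      Function.Exact (LinearMap.compRight ℤ (M := W) (charDual g))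
        (LinearMap.compRight ℤ (M := W) (charDual f)) ∧
      Function.Surjective (LinearMap.compRight ℤ (M := W) (charDual f)) := by
  refine forall_congr' fun W ↦ forall_congr' fun _ ↦ forall_congr' fun _ ↦ ⟨?_, ?_⟩
  · rintro ⟨hf, hfg, hg⟩
    exact ⟨(surjective_btmap_iff W g).mp hg, (exact_btmap_iff W f g hg).mp hfg,
      (injective_btmap_iff W f).mp hf⟩
  · rintro ⟨hg, hfg, hf⟩
    have hg' := (surjective_btmap_iff W g).mpr hg
    exact ⟨(injective_btmap_iff W f).mpr hf, (exact_btmap_iff W f g hg').mpr hfg, hg'⟩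

end Purity

/-- A short exact sequence `0 → X → Y → Z → 0` of left `R`-modules is pure exact if and
only if the induced sequence of character modules `0 → Z⁺ → Y⁺ → X⁺ → 0` is a split
exact sequence of right `R`-modules. -/
theorem pure_iff_characterSequence_split
    (R : Type u) [Ring R] (X Y Z : Type u)
    [AddCommGroup X] [Module R X] [AddCommGroup Y] [Module R Y] [AddCommGroup Z] [Module R Z]
    (f : X →ₗ[R] Y) (g : Y →ₗ[R] Z)
    (hf : Function.Injective f) (hg : Function.Surjective g) (hfg : Function.Exact f g) :
    TensorPure R f g ↔
      (Function.Injective (charDual g) ∧ Function.Exact (charDual g) (charDual f) ∧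
        Function.Surjective (charDual f) ∧
        ∃ s : CharacterModule X →ₗ[Rᵐᵒᵖ] CharacterModule Y,
          (charDual f) ∘ₗ s = LinearMap.id) := by
  rw [tensorPure_iff_forall_exact_compRight]
  constructor
  · intro hW
    obtain ⟨s, hs⟩ := (hW (CharacterModule X)).2.2 LinearMap.id
    exact ⟨dual_injective_of_surjective (g.restrictScalars ℤ) hg,
      dual_exact (u := f.restrictScalars ℤ) (v := g.restrictScalars ℤ) hfg hg,
      dual_surjective_of_injective (f.restrictScalars ℤ) hf, s, hs⟩
  · rintro ⟨hinj, hexact, -, s, hs⟩ W _ _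
    exact ⟨fun _ _ ↦ (LinearMap.cancel_left hinj).mp,
      LinearMap.exact_compRight_of_exact hinj hexact,
      LinearMap.surjective_compRight_of_comp_eq_id hs⟩
end

section
/- A left R-module M is strongly fp-injective (i.e. Ext^n_R(P, M) = 0 for all finitely presented P and all n ≥ 1) if and only if M admits a pure acyclic injective resolution, that is, an exact sequence 0 → M → E⁰ → E¹ → ⋯ with each Eⁱ injective which is pure exact (each short exact sequence 0 → Ker → Eⁱ → Ker → 0 obtained from it is pure). -/
open CategoryTheory

universe u

/-- The `n`-th Ext group `Ext^n_R(P, M)` of two left `R`-modules, computed in the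
abelian category of `R`-modules (as a `ℤ`-linear category, so that `R` may be
noncommutative). -/
noncomputable def ExtGrp (R : Type u) [Ring R] (n : ℕ)
    (P M : Type u) [AddCommGroup P] [Module R P] [AddCommGroup M] [Module R M] : Type u :=
  ((Ext ℤ (ModuleCat.{u} R) n).obj (Opposite.op (ModuleCat.of R P))).obj (ModuleCat.of R M)

/-- A left `R`-module `M` is strongly fp-injective if `Ext^n_R(P, M) = 0` for every
finitely presented left `R`-module `P` and every `n ≥ 1`. -/
def StronglyFpInjective (R : Type u) [Ring R] (M : Type u) [AddCommGroup M] [Module R M] : Prop :=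
  ∀ (P : Type u) [AddCommGroup P] [Module R P], Module.FinitePresentation R P →
    ∀ n : ℕ, 1 ≤ n → Subsingleton (ExtGrp R n P M)

/-- A left `R`-module `M` is fp-injective if `Ext¹_R(P, M) = 0` for every finitely
presented left `R`-module `P`. -/
def FpInjective (R : Type u) [Ring R] (M : Type u) [AddCommGroup M] [Module R M] : Prop :=
  ∀ (P : Type u) [AddCommGroup P] [Module R P], Module.FinitePresentation R P →
    Subsingleton (ExtGrp R 1 P M)

/-- A pure acyclic injective resolution `0 → M → E⁰ → E¹ → ⋯` of a left `R`-module `M`: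
each `Eⁱ` is injective, the sequence is exact, and it stays exact after applying
`Hom_R(N, -)` for every finitely presented `N` (equivalently, each short exact sequence
of cycles extracted from it is pure). -/
structure PureAcyclicInjectiveResolution (R : Type u) [Ring R] (M : Type u)
    [AddCommGroup M] [Module R M] : Type (u + 1) where
  E : ℕ → Type u
  [grp : ∀ i, AddCommGroup (E i)]
  [mod : ∀ i, Module R (E i)]
  ε : M →ₗ[R] E 0
  d : ∀ i, E i →ₗ[R] E (i + 1)
  injective : ∀ i, Module.Injective R (E i)
  mono : Function.Injective ε
  exact₀ : Function.Exact ε (d 0)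
  exact : ∀ i, Function.Exact (d i) (d (i + 1))
  pure : ∀ (N : Type u) [AddCommGroup N] [Module R N], Module.FinitePresentation R N →
    Function.Injective (fun φ : N →ₗ[R] M => ε ∘ₗ φ) ∧
    Function.Exact (fun φ : N →ₗ[R] M => ε ∘ₗ φ) (fun φ : N →ₗ[R] E 0 => d 0 ∘ₗ φ) ∧
    ∀ i, Function.Exact (fun φ : N →ₗ[R] E i => d i ∘ₗ φ)
      (fun φ : N →ₗ[R] E (i + 1) => d (i + 1) ∘ₗ φ)

section Aux

variable {R : Type u} [Ring R]

lemma isZero_iff_subsingleton (M : ModuleCat.{u} ℤ) : Limits.IsZero M ↔ Subsingleton M := by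
  constructor
  · intro h
    refine ⟨fun a b => ?_⟩
    have : (𝟙 M : M ⟶ M) = 0 := h.eq_of_src _ _
    calc a = (𝟙 M : M ⟶ M) a := rfl
    _ = (0 : M ⟶ M) a := by rw [this]
    _ = (𝟙 M : M ⟶ M) b := by rw [this]; rfl
    _ = b := rfl
  · intro h
    exact ModuleCat.isZero_of_subsingleton M

lemma extIff (P M : Type u) [AddCommGroup P] [Module R P]
    [AddCommGroup M] [Module R M] (Q : ProjectiveResolution (ModuleCat.of R P)) (n : ℕ) :
    Subsingleton (ExtGrp R (n + 1) P M) ↔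
      ∀ f : Q.complex.X (n + 1) ⟶ ModuleCat.of R M, Q.complex.d (n + 2) (n + 1) ≫ f = 0 →
        ∃ g : Q.complex.X n ⟶ ModuleCat.of R M, Q.complex.d (n + 1) n ≫ g = f := by
  have e := Q.isoExt (R := ℤ) (n + 1) (ModuleCat.of R M)
  have equiv : ExtGrp R (n+1) P M ≃
      (Q.complex.linearYonedaObj ℤ (ModuleCat.of R M)).homology (n+1) :=
    ((forget (ModuleCat ℤ)).mapIso e).toEquiv
  rw [equiv.subsingleton_congr, ← isZero_iff_subsingleton,
    ← HomologicalComplex.exactAt_iff_isZero_homology,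
    (Q.complex.linearYonedaObj ℤ (ModuleCat.of R M)).exactAt_iff' n (n+1) (n+2)
      (by simp [CochainComplex.prev]) (by simp),
    ShortComplex.moduleCat_exact_iff]
  exact Iff.rfl

section
variable {P : Type u} [AddCommGroup P] [Module R P]
variable {P : Type u} [AddCommGroup P] [Module R P]

/-- augmentation -/
noncomputable def resEps (Q : ProjectiveResolution (ModuleCat.of R P)) :
    Q.complex.X 0 →ₗ[R] P :=
  (Q.π.f 0 ≫ (HomologicalComplex.singleObjXSelf (ComplexShape.down ℕ) 0 (ModuleCat.of R P)).hom :
    Q.complex.X 0 ⟶ ModuleCat.of R P).hom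

lemma resEps_surj (Q : ProjectiveResolution (ModuleCat.of R P)) :
    Function.Surjective (resEps Q) := by
  have : Epi (Q.π.f 0 ≫ (HomologicalComplex.singleObjXSelf (ComplexShape.down ℕ) 0
      (ModuleCat.of R P)).hom) := epi_comp _ _
  exact (ModuleCat.epi_iff_surjective _).mp this

lemma resEps_d (Q : ProjectiveResolution (ModuleCat.of R P)) (x : Q.complex.X 1) :
    resEps Q (Q.complex.d 1 0 x) = 0 := by
  have : Q.complex.d 1 0 ≫ (Q.π.f 0 ≫ (HomologicalComplex.singleObjXSelf (ComplexShape.down ℕ) 0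
      (ModuleCat.of R P)).hom) = 0 := by
    rw [← Category.assoc, Q.complex_d_comp_π_f_zero, Limits.zero_comp]
  exact congrFun (congrArg (fun (h : Q.complex.X 1 ⟶ ModuleCat.of R P) => ⇑h) this) x

lemma res_exact_zero (Q : ProjectiveResolution (ModuleCat.of R P)) (x : Q.complex.X 0)
    (hx : resEps Q x = 0) : ∃ y, Q.complex.d 1 0 y = x := by
  have h := Q.exact₀
  rw [ShortComplex.moduleCat_exact_iff] at h
  refine h x ?_
  have : Q.π.f 0 x = ((HomologicalComplex.singleObjXSelf (ComplexShape.down ℕ) 0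
      (ModuleCat.of R P)).inv) (resEps Q x) := by
    show Q.π.f 0 x = ((HomologicalComplex.singleObjXSelf (ComplexShape.down ℕ) 0
      (ModuleCat.of R P)).hom ≫ (HomologicalComplex.singleObjXSelf (ComplexShape.down ℕ) 0
      (ModuleCat.of R P)).inv) (Q.π.f 0 x)
    rw [Iso.hom_inv_id]; rfl
  rw [this, hx, map_zero]

lemma res_exact_succ (Q : ProjectiveResolution (ModuleCat.of R P)) (n : ℕ)
    (x : Q.complex.X (n + 1)) (hx : Q.complex.d (n + 1) n x = 0) :
    ∃ y, Q.complex.d (n + 2) (n + 1) y = x := by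
  have h := Q.exact_succ n
  rw [ShortComplex.moduleCat_exact_iff] at h
  exact h x hx

lemma res_d_d (Q : ProjectiveResolution (ModuleCat.of R P)) (n : ℕ)
    (x : Q.complex.X (n + 2)) : Q.complex.d (n + 1) n (Q.complex.d (n + 2) (n + 1) x) = 0 := by
  have : Q.complex.d (n+2) (n+1) ≫ Q.complex.d (n+1) n = 0 := Q.complex.d_comp_d _ _ _
  exact congrFun (congrArg (fun (h : Q.complex.X (n+2) ⟶ Q.complex.X n) => ⇑h) this) x

lemma res_projective (Q : ProjectiveResolution (ModuleCat.of R P)) (n : ℕ) :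
    Module.Projective R (Q.complex.X n) := by
  rw [IsProjective.iff_projective.{u, u}]
  have : Projective (Q.complex.X n) := inferInstance
  rwa [ModuleCat.of_coe]

end

lemma factor_surj {A B C : Type u} [AddCommGroup A] [Module R A] [AddCommGroup B] [Module R B]
    [AddCommGroup C] [Module R C] (p : A →ₗ[R] B) (hs : Function.Surjective p)
    (f : A →ₗ[R] C) (h : ∀ x, p x = 0 → f x = 0) :
    ∃ g : B →ₗ[R] C, ∀ x, g (p x) = f x := by
  have hle : LinearMap.ker p ≤ LinearMap.ker f := fun x hx => h x hx
  refine ⟨(LinearMap.ker p).liftQ f hle ∘ₗ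
    (LinearMap.quotKerEquivOfSurjective p hs).symm.toLinearMap, fun x => ?_⟩
  have h1 : (LinearMap.quotKerEquivOfSurjective p hs).symm (p x) =
      Submodule.Quotient.mk x := by
    apply (LinearMap.quotKerEquivOfSurjective p hs).injective
    simp [LinearMap.quotKerEquivOfSurjective, LinearMap.quotKerEquivRange_apply_mk]
  simp [h1]

lemma factor_inj {C E X : Type u} [AddCommGroup C] [Module R C] [AddCommGroup E] [Module R E]
    [AddCommGroup X] [Module R X] (ι : C →ₗ[R] E) (hι : Function.Injective ι)
    (f : X →ₗ[R] E) (h : ∀ x, f x ∈ LinearMap.range ι) :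
    ∃ g : X →ₗ[R] C, ∀ x, ι (g x) = f x := by
  refine ⟨(LinearEquiv.ofInjective ι hι).symm.toLinearMap ∘ₗ
    (LinearMap.codRestrict (LinearMap.range ι) f h), fun x => ?_⟩
  have := (LinearEquiv.ofInjective ι hι).apply_symm_apply
    (LinearMap.codRestrict (LinearMap.range ι) f h x)
  have h2 : ∀ c, ((LinearEquiv.ofInjective ι hι) c : E) = ι c := fun c => rfl
  simp only [LinearMap.coe_comp, Function.comp_apply, LinearEquiv.coe_coe]
  rw [← h2]
  rw [this]
  rfl

section
variable {P : Type u} [AddCommGroup P] [Module R P]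
variable {M : Type u} [AddCommGroup M] [Module R M]

/-- Bridge: Ext vanishing as a statement about linear maps. -/
lemma extIff' (Q : ProjectiveResolution (ModuleCat.of R P)) (n : ℕ) :
    Subsingleton (ExtGrp R (n + 1) P M) ↔
      ∀ f : Q.complex.X (n + 1) →ₗ[R] M, (∀ x, f (Q.complex.d (n + 2) (n + 1) x) = 0) →
        ∃ g : Q.complex.X n →ₗ[R] M, ∀ x, g (Q.complex.d (n + 1) n x) = f x := by
  rw [extIff P M Q n]
  constructor
  · intro h f hf
    obtain ⟨g, hg⟩ := h (ModuleCat.ofHom f : Q.complex.X (n+1) ⟶ ModuleCat.of R M) (by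
      ext x
      exact hf x)
    exact ⟨g.hom, fun x => congrFun (congrArg (fun (h : Q.complex.X (n+1) ⟶ ModuleCat.of R M) => ⇑h) hg) x⟩
  · intro h f hf
    obtain ⟨g, hg⟩ := h f.hom (fun x =>
      congrFun (congrArg (fun (h : Q.complex.X (n+2) ⟶ ModuleCat.of R M) => ⇑h) hf) x)
    exact ⟨ModuleCat.ofHom g, by ext x; exact hg x⟩

/-- Cocycles valued in an injective module are coboundaries. -/
lemma injective_vanish (Q : ProjectiveResolution (ModuleCat.of R P))
    {E : Type u} [AddCommGroup E] [Module R E] (hE : Module.Injective R E) (n : ℕ)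
    (f : Q.complex.X (n + 1) →ₗ[R] E) (hf : ∀ x, f (Q.complex.d (n + 2) (n + 1) x) = 0) :
    ∃ g : Q.complex.X n →ₗ[R] E, ∀ x, g (Q.complex.d (n + 1) n x) = f x := by
  set d₁ : Q.complex.X (n+1) →ₗ[R] Q.complex.X n :=
    (Q.complex.d (n+1) n : Q.complex.X (n+1) ⟶ Q.complex.X n).hom with hd₁
  obtain ⟨h, hh⟩ := factor_surj d₁.rangeRestrict d₁.surjective_rangeRestrict f (by
    intro x hx
    have hx' : d₁ x = 0 := by
      have := congrArg (Subtype.val) hx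
      exact this
    obtain ⟨y, hy⟩ := res_exact_succ Q n x hx'
    rw [← hy]; exact hf y)
  obtain ⟨g, hg⟩ := hE.out (LinearMap.range d₁).subtype (Submodule.injective_subtype _) h
  refine ⟨g, fun x => ?_⟩
  have : g (d₁ x) = g ((LinearMap.range d₁).subtype (d₁.rangeRestrict x)) := rfl
  rw [this, hg, hh]

end

section
variable {P : Type u} [AddCommGroup P] [Module R P]
variable {C E : Type u} [AddCommGroup C] [Module R C] [AddCommGroup E] [Module R E]

/-- Dimension shifting: vanishing for `E ⧸ range ι` in degree `n + 1` follows from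
vanishing for `C` in degree `n + 2` when `E` is injective. -/
lemma dimshift (Q : ProjectiveResolution (ModuleCat.of R P))
    (ι : C →ₗ[R] E) (hι : Function.Injective ι) (hE : Module.Injective R E) (n : ℕ)
    (hC : ∀ f : Q.complex.X (n + 2) →ₗ[R] C, (∀ x, f (Q.complex.d (n + 3) (n + 2) x) = 0) →
      ∃ g : Q.complex.X (n + 1) →ₗ[R] C, ∀ x, g (Q.complex.d (n + 2) (n + 1) x) = f x)
    (f : Q.complex.X (n + 1) →ₗ[R] (E ⧸ LinearMap.range ι))
    (hf : ∀ x, f (Q.complex.d (n + 2) (n + 1) x) = 0) :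
    ∃ g : Q.complex.X n →ₗ[R] (E ⧸ LinearMap.range ι),
      ∀ x, g (Q.complex.d (n + 1) n x) = f x := by
  have hproj := res_projective Q (n + 1)
  obtain ⟨ft, hft⟩ := Module.projective_lifting_property (LinearMap.range ι).mkQ f
    (Submodule.mkQ_surjective _)
  have hftx : ∀ x, Submodule.Quotient.mk (ft x) = f x := fun x =>
    congrFun (congrArg (fun (h : _ →ₗ[R] _) => ⇑h) hft) x
  have hmem : ∀ x, ft (Q.complex.d (n + 2) (n + 1) x) ∈ LinearMap.range ι := by
    intro x
    rw [← Submodule.Quotient.mk_eq_zero, hftx, hf]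
  obtain ⟨w, hw⟩ := factor_inj ι hι
    (ft ∘ₗ (Q.complex.d (n + 2) (n + 1) : Q.complex.X (n+2) ⟶ Q.complex.X (n+1)).hom) hmem
  have hwc : ∀ x, w (Q.complex.d (n + 3) (n + 2) x) = 0 := by
    intro x
    apply hι
    rw [hw, map_zero]
    show ft (Q.complex.d (n + 2) (n + 1) (Q.complex.d (n + 3) (n + 2) x)) = 0
    rw [res_d_d Q (n + 1) x, map_zero]
  obtain ⟨v, hv⟩ := hC w hwc
  have hg1 : ∀ x, (ft - ι ∘ₗ v) (Q.complex.d (n + 2) (n + 1) x) = 0 := by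
    intro x
    have : ι (v (Q.complex.d (n + 2) (n + 1) x)) = ι (w x) := by rw [hv]
    simp only [LinearMap.sub_apply, LinearMap.coe_comp, Function.comp_apply, this, hw]
    show ft (Q.complex.d (n + 2) (n + 1) x) - ft (Q.complex.d (n + 2) (n + 1) x) = 0
    exact sub_self _
  obtain ⟨h, hh⟩ := injective_vanish Q hE n (ft - ι ∘ₗ v) hg1
  refine ⟨(LinearMap.range ι).mkQ ∘ₗ h, fun x => ?_⟩
  simp only [LinearMap.coe_comp, Function.comp_apply, hh]
  simp only [LinearMap.sub_apply, LinearMap.coe_comp, Function.comp_apply, map_sub]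
  have h0 : (LinearMap.range ι).mkQ (ι (v x)) = 0 := by
    rw [Submodule.mkQ_apply, Submodule.Quotient.mk_eq_zero]
    exact ⟨v x, rfl⟩
  rw [h0, sub_zero]
  exact hftx x

/-- Lifting maps to a quotient along a pure embedding, using `Ext¹`-vanishing. -/
lemma homlift (Q : ProjectiveResolution (ModuleCat.of R P))
    (ι : C →ₗ[R] E) (hι : Function.Injective ι)
    (hC : ∀ f : Q.complex.X 1 →ₗ[R] C, (∀ x, f (Q.complex.d 2 1 x) = 0) →
      ∃ g : Q.complex.X 0 →ₗ[R] C, ∀ x, g (Q.complex.d 1 0 x) = f x)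
    (ψ : P →ₗ[R] (E ⧸ LinearMap.range ι)) :
    ∃ φ : P →ₗ[R] E, (LinearMap.range ι).mkQ ∘ₗ φ = ψ := by
  have hproj := res_projective Q 0
  obtain ⟨u, hu⟩ := Module.projective_lifting_property (LinearMap.range ι).mkQ
    (ψ ∘ₗ resEps Q) (Submodule.mkQ_surjective _)
  have hux : ∀ x, Submodule.Quotient.mk (u x) = ψ (resEps Q x) := fun x =>
    congrFun (congrArg (fun (h : _ →ₗ[R] _) => ⇑h) hu) x
  have hmem : ∀ x, u (Q.complex.d 1 0 x) ∈ LinearMap.range ι := by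
    intro x
    rw [← Submodule.Quotient.mk_eq_zero, hux, resEps_d, map_zero]
  obtain ⟨w, hw⟩ := factor_inj ι hι
    (u ∘ₗ (Q.complex.d 1 0 : Q.complex.X 1 ⟶ Q.complex.X 0).hom) hmem
  have hwc : ∀ x, w (Q.complex.d 2 1 x) = 0 := by
    intro x
    apply hι
    rw [hw, map_zero]
    show u (Q.complex.d 1 0 (Q.complex.d 2 1 x)) = 0
    rw [res_d_d Q 0 x, map_zero]
  obtain ⟨v, hv⟩ := hC w hwc
  have hg1 : ∀ x, resEps Q x = 0 → (u - ι ∘ₗ v) x = 0 := by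
    intro x hx
    obtain ⟨y, rfl⟩ := res_exact_zero Q x hx
    have : ι (v (Q.complex.d 1 0 y)) = ι (w y) := by rw [hv]
    simp only [LinearMap.sub_apply, LinearMap.coe_comp, Function.comp_apply, this, hw]
    show u (Q.complex.d 1 0 y) - u (Q.complex.d 1 0 y) = 0
    exact sub_self _
  obtain ⟨φ, hφ⟩ := factor_surj (resEps Q) (resEps_surj Q) (u - ι ∘ₗ v) hg1
  refine ⟨φ, ?_⟩
  apply LinearMap.ext
  intro p
  obtain ⟨x, rfl⟩ := resEps_surj Q p
  simp only [LinearMap.coe_comp, Function.comp_apply, hφ]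
  simp only [LinearMap.sub_apply, LinearMap.coe_comp, Function.comp_apply, map_sub]
  have h0 : (LinearMap.range ι).mkQ (ι (v x)) = 0 := by
    rw [Submodule.mkQ_apply, Submodule.Quotient.mk_eq_zero]
    exact ⟨v x, rfl⟩
  rw [h0, sub_zero, Submodule.mkQ_apply, hux]

end

attribute [instance] PureAcyclicInjectiveResolution.grp PureAcyclicInjectiveResolution.mod

section Backward

variable {M : Type u} [AddCommGroup M] [Module R M]
variable {P : Type u} [AddCommGroup P] [Module R P]

lemma backward_claim (res : PureAcyclicInjectiveResolution R M)
    (hP : Module.FinitePresentation R P) (Q : ProjectiveResolution (ModuleCat.of R P)) :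
    ∀ n i (f : Q.complex.X (n + 1) →ₗ[R] res.E i), (∀ x, res.d i (f x) = 0) →
      (∀ x, f (Q.complex.d (n + 2) (n + 1) x) = 0) →
      ∃ g : Q.complex.X n →ₗ[R] res.E i, (∀ x, res.d i (g x) = 0) ∧
        ∀ x, g (Q.complex.d (n + 1) n x) = f x := by
  intro n
  induction n with
  | zero =>
    intro i f hcyc hcoc
    obtain ⟨g₀, hg₀⟩ := injective_vanish Q (res.injective i) 0 f hcoc
    have hq0 : ∀ x, resEps Q x = 0 → (res.d i ∘ₗ g₀) x = 0 := by
      intro x hx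
      obtain ⟨y, rfl⟩ := res_exact_zero Q x hx
      show res.d i (g₀ (Q.complex.d 1 0 y)) = 0
      rw [hg₀, hcyc]
    obtain ⟨h, hh⟩ := factor_surj (resEps Q) (resEps_surj Q) (res.d i ∘ₗ g₀) hq0
    have hd1h : (fun φ : P →ₗ[R] res.E (i + 1) => res.d (i + 1) ∘ₗ φ) h = 0 := by
      apply LinearMap.ext
      intro p
      obtain ⟨x, rfl⟩ := resEps_surj Q p
      show res.d (i + 1) (h (resEps Q x)) = 0
      rw [hh]
      exact (res.exact i).apply_apply_eq_zero (g₀ x)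
    obtain ⟨φ, hφ⟩ := ((res.pure P hP).2.2 i h).mp hd1h
    have hφx : ∀ p, res.d i (φ p) = h p := fun p =>
      congrFun (congrArg (fun (ξ : _ →ₗ[R] _) => ⇑ξ) hφ) p
    refine ⟨g₀ - φ ∘ₗ resEps Q, fun x => ?_, fun x => ?_⟩
    · simp only [LinearMap.sub_apply, LinearMap.coe_comp, Function.comp_apply, map_sub, hφx]
      show res.d i (g₀ x) - h (resEps Q x) = 0
      rw [hh]
      exact sub_self _
    · simp only [LinearMap.sub_apply, LinearMap.coe_comp, Function.comp_apply, hg₀]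
      have hz : resEps Q (Q.complex.d (0 + 1) 0 x) = 0 := resEps_d Q x
      rw [hz, map_zero, sub_zero]
  | succ n IH =>
    intro i f hcyc hcoc
    obtain ⟨g₀, hg₀⟩ := injective_vanish Q (res.injective i) (n + 1) f hcoc
    have hq1 : ∀ x, res.d (i + 1) ((res.d i ∘ₗ g₀) x) = 0 := fun x =>
      (res.exact i).apply_apply_eq_zero (g₀ x)
    have hq2 : ∀ x, (res.d i ∘ₗ g₀) (Q.complex.d (n + 2) (n + 1) x) = 0 := by
      intro x
      show res.d i (g₀ (Q.complex.d (n + 2) (n + 1) x)) = 0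
      rw [hg₀, hcyc]
    obtain ⟨h, hh1, hh2⟩ := IH (i + 1) (res.d i ∘ₗ g₀) hq1 hq2
    have hmem : ∀ x, h x ∈ LinearMap.range (res.d i) := by
      intro x
      exact ((res.exact i) (h x)).mp (hh1 x)
    have hproj := res_projective Q n
    obtain ⟨ht, hht⟩ := Module.projective_lifting_property (res.d i).rangeRestrict
      (LinearMap.codRestrict (LinearMap.range (res.d i)) h hmem)
      (LinearMap.surjective_rangeRestrict _)
    have hhtx : ∀ x, res.d i (ht x) = h x := by
      intro x
      have := congrFun (congrArg (fun (ξ : _ →ₗ[R] _) => ⇑ξ) hht) x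
      exact congrArg Subtype.val this
    refine ⟨g₀ - ht ∘ₗ (Q.complex.d (n + 1) n : Q.complex.X (n+1) ⟶ Q.complex.X n).hom,
      fun x => ?_, fun y => ?_⟩
    · simp only [LinearMap.sub_apply, LinearMap.coe_comp, Function.comp_apply, map_sub, hhtx]
      show res.d i (g₀ x) - h (Q.complex.d (n + 1) n x) = 0
      rw [hh2]
      exact sub_self _
    · simp only [LinearMap.sub_apply, LinearMap.coe_comp, Function.comp_apply, hg₀]
      show f y - ht (Q.complex.d (n + 1) n (Q.complex.d (n + 2) (n + 1) y)) = f y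
      rw [res_d_d Q n y, map_zero, sub_zero]

end Backward

section Backward2
variable {M : Type u} [AddCommGroup M] [Module R M]

lemma backward (res : PureAcyclicInjectiveResolution R M) : StronglyFpInjective R M := by
  intro P _ _ hP n hn
  obtain ⟨m, rfl⟩ : ∃ m, n = m + 1 := ⟨n - 1, by omega⟩
  have : HasProjectiveResolution (ModuleCat.of R P) := inferInstance
  obtain ⟨Q⟩ := this.out
  rw [extIff' Q m]
  intro f hf
  have hcyc : ∀ x, res.d 0 ((res.ε ∘ₗ f) x) = 0 := fun x =>
    res.exact₀.apply_apply_eq_zero (f x)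
  have hcoc : ∀ x, (res.ε ∘ₗ f) (Q.complex.d (m + 2) (m + 1) x) = 0 := by
    intro x
    show res.ε (f (Q.complex.d (m + 2) (m + 1) x)) = 0
    rw [hf, map_zero]
  obtain ⟨g, hg1, hg2⟩ := backward_claim res hP Q m 0 (res.ε ∘ₗ f) hcyc hcoc
  have hmem : ∀ x, g x ∈ LinearMap.range res.ε := by
    intro x
    exact (res.exact₀ (g x)).mp (hg1 x)
  obtain ⟨g', hg'⟩ := factor_inj res.ε res.mono g hmem
  refine ⟨g', fun x => res.mono ?_⟩
  rw [hg', hg2]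
  rfl

end Backward2

section Forward
variable (R)

/-- A strongly fp-injective module, bundled. -/
structure SfpMod : Type (u + 1) where
  C : Type u
  [grp : AddCommGroup C]
  [mod : Module R C]
  sfp : StronglyFpInjective R C

attribute [instance] SfpMod.grp SfpMod.mod

variable {R}

/-- An injective module containing `T.C`. -/
noncomputable def SfpMod.EObj (T : SfpMod R) : ModuleCat.{u} R :=
  Injective.under (ModuleCat.of R T.C)

noncomputable def SfpMod.E (T : SfpMod R) : Type u := T.EObj

noncomputable instance (T : SfpMod R) : AddCommGroup T.E :=
  inferInstanceAs (AddCommGroup T.EObj)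

noncomputable instance (T : SfpMod R) : Module R T.E :=
  inferInstanceAs (Module R T.EObj)

noncomputable def SfpMod.emb (T : SfpMod R) : T.C →ₗ[R] T.E :=
  (Injective.ι (ModuleCat.of R T.C) : ModuleCat.of R T.C ⟶ T.EObj).hom

lemma SfpMod.emb_inj (T : SfpMod R) : Function.Injective T.emb :=
  (ModuleCat.mono_iff_injective (Injective.ι (ModuleCat.of R T.C))).mp inferInstance

lemma SfpMod.E_inj (T : SfpMod R) : Module.Injective R T.E := by
  have h : Injective (ModuleCat.of R T.E) := by
    show Injective (ModuleCat.of R (T.EObj : Type u))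
    rw [ModuleCat.of_coe]
    exact Injective.injective_under (ModuleCat.of R T.C)
  exact Module.injective_module_of_injective_object R T.E

/-- The next stage of the tower: the cokernel of the embedding. -/
noncomputable def SfpMod.next (T : SfpMod R) : SfpMod R where
  C := T.E ⧸ LinearMap.range T.emb
  sfp := by
    intro P _ _ hP n hn
    obtain ⟨m, rfl⟩ : ∃ m, n = m + 1 := ⟨n - 1, by omega⟩
    have : HasProjectiveResolution (ModuleCat.of R P) := inferInstance
    obtain ⟨Q⟩ := this.out
    rw [extIff' Q m]
    exact dimshift Q T.emb T.emb_inj T.E_inj m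
      ((extIff' Q (m + 1)).mp (T.sfp P hP (m + 2) (by omega)))

end Forward

section Forward2
variable {M : Type u} [AddCommGroup M] [Module R M]

noncomputable def tower (h : StronglyFpInjective R M) : ℕ → SfpMod R
  | 0 => ⟨M, h⟩
  | i + 1 => (tower h i).next

noncomputable def towd (h : StronglyFpInjective R M) (i : ℕ) :
    (tower h i).E →ₗ[R] (tower h (i + 1)).E :=
  (tower h (i + 1)).emb ∘ₗ
    (show (tower h i).E →ₗ[R] (tower h (i + 1)).C from
      (LinearMap.range (tower h i).emb).mkQ)

lemma towd_eq_zero_iff (h : StronglyFpInjective R M) (i : ℕ) (y : (tower h i).E) :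
    towd h i y = 0 ↔ y ∈ LinearMap.range (tower h i).emb := by
  constructor
  · intro hy
    have : ((LinearMap.range (tower h i).emb).mkQ y :
        (tower h (i + 1)).C) = 0 := by
      apply (tower h (i + 1)).emb_inj
      exact hy.trans (map_zero (tower h (i + 1)).emb).symm
    rwa [Submodule.mkQ_apply, Submodule.Quotient.mk_eq_zero] at this
  · intro hy
    show (tower h (i + 1)).emb ((LinearMap.range (tower h i).emb).mkQ y) = 0
    have : ((LinearMap.range (tower h i).emb).mkQ y : (tower h (i + 1)).C) = 0 := by
      rwa [Submodule.mkQ_apply, Submodule.Quotient.mk_eq_zero]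
    rw [this]
    exact map_zero (tower h (i + 1)).emb

noncomputable def forwardRes (h : StronglyFpInjective R M) :
    PureAcyclicInjectiveResolution R M where
  E i := (tower h i).E
  ε := (tower h 0).emb
  d i := towd h i
  injective i := (tower h i).E_inj
  mono := (tower h 0).emb_inj
  exact₀ := by
    intro y
    rw [towd_eq_zero_iff]
    exact ⟨fun ⟨x, hx⟩ => ⟨x, hx⟩, fun ⟨x, hx⟩ => ⟨x, hx⟩⟩
  exact i := by
    intro y
    rw [towd_eq_zero_iff]
    constructor
    · rintro ⟨c, hc⟩
      obtain ⟨x, rfl⟩ := Submodule.mkQ_surjective (LinearMap.range (tower h i).emb) c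
      exact ⟨x, hc⟩
    · rintro ⟨x, hx⟩
      exact ⟨(LinearMap.range (tower h i).emb).mkQ x, hx⟩
  pure N _ _ hN := by
    refine ⟨?_, ?_, ?_⟩
    · intro φ₁ φ₂ hφ
      apply LinearMap.ext
      intro x
      apply (tower h 0).emb_inj
      exact congrFun (congrArg (fun (ξ : _ →ₗ[R] _) => ⇑ξ) hφ) x
    · intro ψ
      constructor
      · intro hψ
        have hmem : ∀ x, ψ x ∈ LinearMap.range (tower h 0).emb := by
          intro x
          have : towd h 0 (ψ x) = 0 :=
            congrFun (congrArg (fun (ξ : _ →ₗ[R] _) => ⇑ξ) hψ) x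
          rwa [towd_eq_zero_iff] at this
        obtain ⟨φ, hφ⟩ := factor_inj (tower h 0).emb (tower h 0).emb_inj ψ hmem
        exact ⟨φ, LinearMap.ext fun x => hφ x⟩
      · rintro ⟨φ, rfl⟩
        apply LinearMap.ext
        intro x
        show towd h 0 ((tower h 0).emb (φ x)) = 0
        rw [towd_eq_zero_iff]
        exact ⟨φ x, rfl⟩
    · intro i ψ
      constructor
      · intro hψ
        have hmem : ∀ x, ψ x ∈ LinearMap.range (tower h (i + 1)).emb := by
          intro x
          have : towd h (i + 1) (ψ x) = 0 :=
            congrFun (congrArg (fun (ξ : _ →ₗ[R] _) => ⇑ξ) hψ) x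
          rwa [towd_eq_zero_iff] at this
        obtain ⟨ψ', hψ'⟩ := factor_inj (tower h (i + 1)).emb (tower h (i + 1)).emb_inj ψ hmem
        have : HasProjectiveResolution (ModuleCat.of R N) := inferInstance
        obtain ⟨Q⟩ := this.out
        obtain ⟨φ, hφ⟩ := homlift Q (tower h i).emb (tower h i).emb_inj
          ((extIff' Q 0).mp ((tower h i).sfp N hN 1 le_rfl)) ψ'
        refine ⟨φ, LinearMap.ext fun x => ?_⟩
        show (tower h (i + 1)).emb ((LinearMap.range (tower h i).emb).mkQ (φ x)) = ψ x
        have hx : ((LinearMap.range (tower h i).emb).mkQ ∘ₗ φ) x = ψ' x :=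
          congrFun (congrArg (fun (ξ : _ →ₗ[R] _) => ⇑ξ) hφ) x
        rw [show ((LinearMap.range (tower h i).emb).mkQ (φ x) : (tower h (i+1)).C) = ψ' x from hx]
        exact hψ' x
      · rintro ⟨φ, rfl⟩
        apply LinearMap.ext
        intro x
        show towd h (i + 1) (towd h i (φ x)) = 0
        rw [towd_eq_zero_iff]
        exact ⟨(LinearMap.range (tower h i).emb).mkQ (φ x), rfl⟩

end Forward2

end Aux

/-- A left `R`-module `M` is strongly fp-injective if and only if it admits a pure
acyclic injective resolution. -/
theorem stronglyFpInjective_iff_pureAcyclicInjectiveResolution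
    (R : Type u) [Ring R] (M : Type u) [AddCommGroup M] [Module R M] :
    StronglyFpInjective R M ↔ Nonempty (PureAcyclicInjectiveResolution R M) := by
  constructor
  · intro h
    exact ⟨forwardRes h⟩
  · rintro ⟨res⟩
    exact backward res
end

section
/- The class of strongly fp-injective left R-modules is closed under taking cokernels of monomorphisms: if 0 → A → B → C → 0 is exact with A and B strongly fp-injective, then C is strongly fp-injective. -/
open CategoryTheory

universe u

open Limits in
lemma aux_subsingleton_of_isZero {S : Type*} [Ring S] {X : ModuleCat S}
    (h : IsZero X) : Subsingleton X := by
  refine ⟨fun a b => ?_⟩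
  have h0 : (𝟙 X : X ⟶ X) = 0 := h.eq_of_src _ _
  have ha : a = (𝟙 X : X ⟶ X) a := rfl
  have hb : b = (𝟙 X : X ⟶ X) b := rfl
  rw [ha, hb, h0]
  rfl

/-- The class of strongly fp-injective left `R`-modules is closed under taking cokernels
of monomorphisms. -/
theorem stronglyFpInjective_of_cokernel
    (R : Type u) [Ring R] (A B C : Type u)
    [AddCommGroup A] [Module R A] [AddCommGroup B] [Module R B] [AddCommGroup C] [Module R C]
    (f : A →ₗ[R] B) (g : B →ₗ[R] C)
    (hf : Function.Injective f) (hg : Function.Surjective g) (hfg : Function.Exact f g)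
    (hA : StronglyFpInjective R A) (hB : StronglyFpInjective R B) :
    StronglyFpInjective R C := by
  intro P iP mP hP n hn
  obtain ⟨m, rfl⟩ : ∃ m, n = m + 1 := ⟨n - 1, by omega⟩
  let X : ModuleCat.{u} R := ModuleCat.of R P
  let Q : ProjectiveResolution X := ProjectiveResolution.of X
  let KA := Q.complex.linearYonedaObj ℤ (ModuleCat.of R A)
  let KB := Q.complex.linearYonedaObj ℤ (ModuleCat.of R B)
  let KC := Q.complex.linearYonedaObj ℤ (ModuleCat.of R C)
  let fh : ModuleCat.of R A ⟶ ModuleCat.of R B := ModuleCat.ofHom f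
  let gh : ModuleCat.of R B ⟶ ModuleCat.of R C := ModuleCat.ofHom g
  let F : KA ⟶ KB := {
    f := fun i => ModuleCat.ofHom (Linear.rightComp ℤ _ fh)
    comm' := by
      intro i j hij
      refine ModuleCat.hom_ext (LinearMap.ext fun φ => ?_)
      show Q.complex.d j i ≫ ((Linear.rightComp ℤ (Q.complex.X i) fh) φ) =
        (Q.complex.d j i ≫ φ) ≫ fh
      exact (Category.assoc _ _ _).symm }
  let G : KB ⟶ KC := {
    f := fun i => ModuleCat.ofHom (Linear.rightComp ℤ _ gh)
    comm' := by
      intro i j hij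
      refine ModuleCat.hom_ext (LinearMap.ext fun φ => ?_)
      show Q.complex.d j i ≫ ((Linear.rightComp ℤ (Q.complex.X i) gh) φ) =
        (Q.complex.d j i ≫ φ) ≫ gh
      exact (Category.assoc _ _ _).symm }
  have hgf0 : ∀ a : A, g (f a) = 0 := fun a => (hfg (f a)).mpr ⟨a, rfl⟩
  have hFG : F ≫ G = 0 := by
    ext i : 1
    show F.f i ≫ G.f i = 0
    refine ModuleCat.hom_ext (LinearMap.ext fun φ => ?_)
    show ((φ : Q.complex.X i ⟶ ModuleCat.of R A) ≫ fh) ≫ gh = 0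
    exact ModuleCat.hom_ext (LinearMap.ext fun x => hgf0 _)
  let S : ShortComplex (CochainComplex (ModuleCat.{u} ℤ) ℕ) := ShortComplex.mk F G hFG
  have hSE : S.ShortExact := by
    apply HomologicalComplex.shortExact_of_degreewise_shortExact
    intro i
    have hepi : Epi gh := (ModuleCat.epi_iff_surjective gh).mpr hg
    refine ShortComplex.ShortExact.mk' ?_ ?_ ?_
    · -- exactness
      rw [ShortComplex.moduleCat_exact_iff]
      intro φ hφ
      let φ' : Q.complex.X i ⟶ ModuleCat.of R B := φ
      have hφ' : φ' ≫ gh = 0 := hφ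
      have hmem : ∀ x, φ' x ∈ LinearMap.range f := by
        intro x
        apply (hfg _).mp
        exact congrArg (fun χ : Q.complex.X i ⟶ ModuleCat.of R C => χ x) hφ'
      let e : A ≃ₗ[R] LinearMap.range f := LinearEquiv.ofInjective f hf
      let w : Q.complex.X i ⟶ ModuleCat.of R A :=
        ModuleCat.ofHom (e.symm.toLinearMap.comp (LinearMap.codRestrict (LinearMap.range f) φ'.hom hmem))
      refine ⟨w, ?_⟩
      show w ≫ fh = φ'
      refine ModuleCat.hom_ext (LinearMap.ext fun x => ?_)
      show f (e.symm ⟨φ' x, hmem x⟩) = φ' x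
      have h1 : e (e.symm ⟨φ' x, hmem x⟩) = ⟨φ' x, hmem x⟩ := e.apply_symm_apply _
      exact congrArg Subtype.val h1
    · -- mono
      rw [ModuleCat.mono_iff_injective]
      intro φ ψ h
      let φ' : Q.complex.X i ⟶ ModuleCat.of R A := φ
      let ψ' : Q.complex.X i ⟶ ModuleCat.of R A := ψ
      have h' : φ' ≫ fh = ψ' ≫ fh := h
      show φ' = ψ'
      refine ModuleCat.hom_ext (LinearMap.ext fun x => ?_)
      apply hf
      exact congrArg (fun χ : Q.complex.X i ⟶ ModuleCat.of R B => χ x) h'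
    · -- epi
      rw [ModuleCat.epi_iff_surjective]
      intro φ
      let φ' : Q.complex.X i ⟶ ModuleCat.of R C := φ
      haveI := Q.projective i
      exact ⟨Projective.factorThru φ' gh, Projective.factorThru_comp φ' gh⟩
  -- homology long exact sequence
  have hB' : Limits.IsZero (KB.homology (m + 1)) := by
    have inst : Subsingleton (((Ext ℤ (ModuleCat.{u} R) (m + 1)).obj
        (Opposite.op (ModuleCat.of R P))).obj (ModuleCat.of R B)) := hB P hP (m + 1) (by omega)
    exact (ModuleCat.isZero_of_subsingleton _).of_iso
      (Q.isoExt (m + 1) (ModuleCat.of R B)).symm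
  have hA' : Limits.IsZero (KA.homology (m + 2)) := by
    have inst : Subsingleton (((Ext ℤ (ModuleCat.{u} R) (m + 2)).obj
        (Opposite.op (ModuleCat.of R P))).obj (ModuleCat.of R A)) := hA P hP (m + 2) (by omega)
    exact (ModuleCat.isZero_of_subsingleton _).of_iso
      (Q.isoExt (m + 2) (ModuleCat.of R A)).symm
  have hex := hSE.homology_exact₃ (m + 1) (m + 2) (by simp)
  have hzero : Limits.IsZero (KC.homology (m + 1)) := by
    apply hex.isZero_X₂
    · exact hB'.eq_of_src _ _
    · exact hA'.eq_of_tgt _ _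
  have hz2 : Limits.IsZero (((Ext ℤ (ModuleCat.{u} R) (m + 1)).obj
      (Opposite.op (ModuleCat.of R P))).obj (ModuleCat.of R C)) :=
    hzero.of_iso (Q.isoExt (m + 1) (ModuleCat.of R C))
  exact aux_subsingleton_of_isZero hz2
end

section
/- An arbitrary direct product of strongly fp-injective left R-modules is strongly fp-injective. -/
open CategoryTheory

universe u

open CategoryTheory.Limits in
lemma subsingleton_iff_isZero (M : ModuleCat.{u} ℤ) : Subsingleton M ↔ IsZero M := by
  constructor
  · intro h; exact ModuleCat.isZero_of_subsingleton M
  · intro h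
    constructor; intro a b
    have hid : (𝟙 M : M ⟶ M) = 0 := h.eq_of_src _ _
    calc a = (𝟙 M : M ⟶ M) a := rfl
    _ = (0 : M ⟶ M) a := by rw [hid]
    _ = (𝟙 M : M ⟶ M) b := by rw [hid]; rfl
    _ = b := rfl

open CategoryTheory.Limits in
lemma subsingleton_congr_iso {M N : ModuleCat.{u} ℤ} (e : M ≅ N) (h : Subsingleton N) :
    Subsingleton M := by
  constructor
  intro a b
  have key : ∀ x : M, x = e.inv (e.hom x) := fun x => by
    change x = (e.hom ≫ e.inv) x; rw [e.hom_inv_id]; rfl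
  rw [key a, key b, Subsingleton.elim (e.hom a) (e.hom b)]

lemma lyo_d_apply {R : Type u} [Ring R] (X : ChainComplex (ModuleCat.{u} R) ℕ)
    (Y : ModuleCat.{u} R) (i j : ℕ) (f : X.X i ⟶ Y) :
    (X.linearYonedaObj ℤ Y).d i j f = X.d j i ≫ f := by
  simp [ChainComplex.linearYonedaObj]
  rfl

open CategoryTheory.Limits in
lemma ext_pi_subsingleton (R : Type u) [Ring R] (ι : Type u) (G : ι → Type u)
    [∀ i, AddCommGroup (G i)] [∀ i, Module R (G i)]
    (P : Type u) [AddCommGroup P] [Module R P] (n : ℕ)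
    (h : ∀ i, Subsingleton (ExtGrp R n P (G i))) :
    Subsingleton (ExtGrp R n P (∀ i, G i)) := by
  obtain ⟨Pres⟩ : Nonempty (ProjectiveResolution (ModuleCat.of R P)) := HasProjectiveResolution.out
  have tr : ∀ (M : Type u) [AddCommGroup M] [Module R M],
      Subsingleton (ExtGrp R n P M) ↔
      Subsingleton ((Pres.complex.linearYonedaObj ℤ (ModuleCat.of R M)).homology n) := by
    intro M _ _
    have e := Pres.isoExt (R := ℤ) n (ModuleCat.of R M)
    exact ⟨fun hs => subsingleton_congr_iso e.symm hs, fun hs => subsingleton_congr_iso e hs⟩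
  rw [tr]
  have exch : ∀ (Y : ModuleCat.{u} R),
      Subsingleton ((Pres.complex.linearYonedaObj ℤ Y).homology n) ↔
      ∀ (x : Pres.complex.X n ⟶ Y), Pres.complex.d (n+1) n ≫ x = 0 →
        ∃ y : Pres.complex.X (n-1) ⟶ Y, Pres.complex.d n (n-1) ≫ y = x := by
    intro Y
    rw [subsingleton_iff_isZero, ← HomologicalComplex.exactAt_iff_isZero_homology,
      HomologicalComplex.exactAt_iff' _ (n-1) n (n+1) (by cases n <;> simp) (by simp),
      ShortComplex.moduleCat_exact_iff]
    constructor
    · intro H x hx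
      obtain ⟨y, hy⟩ := H x (show (Pres.complex.linearYonedaObj ℤ Y).d n (n+1) x = 0 by
        rw [lyo_d_apply, hx]; rfl)
      have hy' : (Pres.complex.linearYonedaObj ℤ Y).d (n-1) n y = x := hy
      replace hy' := (lyo_d_apply Pres.complex Y (n-1) n y).symm.trans hy'
      exact ⟨y, hy'⟩
    · intro H x hx
      have hx' : (Pres.complex.linearYonedaObj ℤ Y).d n (n+1) x = 0 := hx
      replace hx' := (lyo_d_apply Pres.complex Y n (n+1) x).symm.trans hx'
      obtain ⟨y, hy⟩ := H x hx'
      refine ⟨y, show (Pres.complex.linearYonedaObj ℤ Y).d (n-1) n y = x from ?_⟩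
      rw [lyo_d_apply]; exact hy
  rw [exch]
  intro x hx
  have hcomp : ∀ i, ∃ y : Pres.complex.X (n-1) ⟶ ModuleCat.of R (G i),
      Pres.complex.d n (n-1) ≫ y = x ≫ ModuleCat.ofHom (LinearMap.proj i : (∀ j, G j) →ₗ[R] G i) := by
    intro i
    refine ((exch (ModuleCat.of R (G i))).mp ((tr (G i)).mp (h i)))
      (x ≫ ModuleCat.ofHom (LinearMap.proj i)) ?_
    rw [← Category.assoc, hx]; rfl
  choose y hy using hcomp
  refine ⟨ModuleCat.ofHom (LinearMap.pi fun i => (y i).hom), ?_⟩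
  apply ModuleCat.hom_ext; apply LinearMap.ext; intro p
  funext i
  exact LinearMap.congr_fun (congrArg ModuleCat.Hom.hom (hy i)) p

/-- An arbitrary direct product of strongly fp-injective left `R`-modules is strongly
fp-injective. -/
theorem stronglyFpInjective_pi
    (R : Type u) [Ring R] (ι : Type u) (G : ι → Type u)
    [∀ i, AddCommGroup (G i)] [∀ i, Module R (G i)]
    (hG : ∀ i, StronglyFpInjective R (G i)) :
    StronglyFpInjective R (∀ i, G i) := by
  intro P _ _ hP n hn
  exact ext_pi_subsingleton R ι G P n (fun i => hG i P hP n hn)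
end

section
/- A left R-module X is strongly fp-injective if and only if there exists a pure exact sequence 0 → X → T⁰ → T¹ → ⋯ with each Tⁱ strongly fp-injective. -/
open CategoryTheory

universe u

/-- A pure exact sequence `0 → X → T⁰ → T¹ → ⋯` with each `Tⁱ` strongly fp-injective:
the sequence is exact and remains exact after applying `Hom_R(N, -)` for every finitely
presented `N`. -/
structure PureSFpInjectiveResolution (R : Type u) [Ring R] (X : Type u)
    [AddCommGroup X] [Module R X] : Type (u + 1) where
  T : ℕ → Type u
  [grp : ∀ i, AddCommGroup (T i)]
  [mod : ∀ i, Module R (T i)]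
  ε : X →ₗ[R] T 0
  d : ∀ i, T i →ₗ[R] T (i + 1)
  sfi : ∀ i, StronglyFpInjective R (T i)
  mono : Function.Injective ε
  exact₀ : Function.Exact ε (d 0)
  exact : ∀ i, Function.Exact (d i) (d (i + 1))
  pure : ∀ (N : Type u) [AddCommGroup N] [Module R N], Module.FinitePresentation R N →
    Function.Injective (fun φ : N →ₗ[R] X => ε ∘ₗ φ) ∧
    Function.Exact (fun φ : N →ₗ[R] X => ε ∘ₗ φ) (fun φ : N →ₗ[R] T 0 => d 0 ∘ₗ φ) ∧
    ∀ i, Function.Exact (fun φ : N →ₗ[R] T i => d i ∘ₗ φ)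
      (fun φ : N →ₗ[R] T (i + 1) => d (i + 1) ∘ₗ φ)


section Helpers
open Limits
variable {R : Type u} [Ring R]

lemma subsingleton_of_isZero {M : ModuleCat.{u} ℤ} (h : IsZero M) : Subsingleton M := by
  constructor
  intro a b
  have : (𝟙 M : M ⟶ M) = 0 := h.eq_of_src _ _
  calc a = (𝟙 M : M ⟶ M) a := rfl
  _ = (0 : M ⟶ M) a := by rw [this]
  _ = (𝟙 M : M ⟶ M) b := by rw [this]; rfl
  _ = b := rfl

lemma extGrp_subsingleton_iff (P M : Type u) [AddCommGroup P] [Module R P]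
    [AddCommGroup M] [Module R M] (Pr : ProjectiveResolution (ModuleCat.of R P)) (n : ℕ) :
    Subsingleton (ExtGrp R n P M) ↔
      (Pr.complex.linearYonedaObj ℤ (ModuleCat.of R M)).ExactAt n := by
  rw [HomologicalComplex.exactAt_iff_isZero_homology]
  have e : ExtGrp R n P M ≃ (Pr.complex.linearYonedaObj ℤ (ModuleCat.of R M)).homology n :=
    ((forget _).mapIso (Pr.isoExt n (ModuleCat.of R M))).toEquiv
  constructor
  · intro h
    have : Subsingleton ((Pr.complex.linearYonedaObj ℤ (ModuleCat.of R M)).homology n) :=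
      e.symm.subsingleton
    exact ModuleCat.isZero_of_subsingleton _
  · intro h
    have := subsingleton_of_isZero h
    exact e.subsingleton

lemma ext_succ_subsingleton_iff (P M : Type u) [AddCommGroup P] [Module R P]
    [AddCommGroup M] [Module R M] (Pr : ProjectiveResolution (ModuleCat.of R P)) (m : ℕ) :
    Subsingleton (ExtGrp R (m+1) P M) ↔
      ∀ f : Pr.complex.X (m+1) →ₗ[R] M,
        f ∘ₗ ((Pr.complex.d (m+2) (m+1)).hom : Pr.complex.X (m+2) →ₗ[R] Pr.complex.X (m+1)) = 0 →
        ∃ g : Pr.complex.X m →ₗ[R] M,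
          g ∘ₗ ((Pr.complex.d (m+1) m).hom : Pr.complex.X (m+1) →ₗ[R] Pr.complex.X m) = f := by
  rw [extGrp_subsingleton_iff P M Pr (m+1),
    HomologicalComplex.exactAt_iff' _ m (m+1) (m+2) (by simp) (by simp),
    ShortComplex.moduleCat_exact_iff]
  constructor
  · intro h f hf
    obtain ⟨g, hg⟩ := h (ModuleCat.ofHom f) (ModuleCat.hom_ext hf)
    exact ⟨g.hom, congrArg ModuleCat.Hom.hom hg⟩
  · intro h f hf
    obtain ⟨g, hg⟩ := h f.hom (congrArg ModuleCat.Hom.hom hf)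
    exact ⟨ModuleCat.ofHom g, ModuleCat.hom_ext hg⟩

lemma factor_through_pi (P : Type u) [AddCommGroup P] [Module R P]
    (Pr : ProjectiveResolution (ModuleCat.of R P)) (Y : Type u) [AddCommGroup Y] [Module R Y]
    (u : Pr.complex.X 0 →ₗ[R] Y)
    (hu : u ∘ₗ ((Pr.complex.d 1 0).hom : Pr.complex.X 1 →ₗ[R] Pr.complex.X 0) = 0) :
    ∃ v : P →ₗ[R] Y, v ∘ₗ ((Pr.π.f 0).hom : Pr.complex.X 0 →ₗ[R] P) = u := by
  let uhom : Pr.complex.X 0 ⟶ ModuleCat.of R Y := ModuleCat.ofHom u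
  have hu' : Pr.complex.d 1 0 ≫ uhom = 0 := by
    ext x; exact LinearMap.congr_fun hu x
  obtain ⟨d, hd⟩ := Limits.CokernelCofork.IsColimit.desc' Pr.isColimitCokernelCofork uhom hu'
  exact ⟨d.hom, congrArg ModuleCat.Hom.hom hd⟩

lemma pi_surjective (P : Type u) [AddCommGroup P] [Module R P]
    (Pr : ProjectiveResolution (ModuleCat.of R P)) :
    Function.Surjective ((Pr.π.f 0).hom : Pr.complex.X 0 →ₗ[R] P) := by
  have : Epi (Pr.π.f 0) := inferInstance
  rw [ModuleCat.epi_iff_surjective] at this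
  exact this

lemma proj_complex (P : Type u) [AddCommGroup P] [Module R P]
    (Pr : ProjectiveResolution (ModuleCat.of R P)) (k : ℕ) :
    Module.Projective R (Pr.complex.X k) := by
  rw [IsProjective.iff_projective]
  exact inferInstanceAs (Projective (Pr.complex.X k))

lemma lift_of_range_le {K A B : Type u} [AddCommGroup K] [Module R K] [AddCommGroup A]
    [Module R A] [AddCommGroup B] [Module R B] (hK : Module.Projective R K)
    (a : A →ₗ[R] B) (b : K →ₗ[R] B) (h : ∀ x, b x ∈ LinearMap.range a) :
    ∃ l : K →ₗ[R] A, a ∘ₗ l = b := by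
  obtain ⟨l, hl⟩ := Module.projective_lifting_property a.rangeRestrict
    (b.codRestrict (LinearMap.range a) h) a.surjective_rangeRestrict
  refine ⟨l, ?_⟩
  ext x
  have := congrArg (fun φ => (φ x : B)) hl
  simpa using this

section Shift
variable {X : Type u} [AddCommGroup X] [Module R X] (res : PureSFpInjectiveResolution R X)

attribute [instance] PureSFpInjectiveResolution.grp PureSFpInjectiveResolution.mod

/-- The shifted resolution, resolving `range (d 0)`. -/
noncomputable def PureSFpInjectiveResolution.shift :
    PureSFpInjectiveResolution R ↥(LinearMap.range (res.d 0)) where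
  T i := res.T (i + 1)
  ε := Submodule.subtype _
  d i := res.d (i + 1)
  sfi i := res.sfi (i + 1)
  mono := Subtype.val_injective
  exact₀ := by
    intro y
    rw [res.exact 0 y]
    constructor
    · rintro ⟨x, hx⟩
      exact ⟨⟨y, ⟨x, hx⟩⟩, rfl⟩
    · rintro ⟨⟨y', ⟨x, hx⟩⟩, h⟩
      exact ⟨x, hx.trans h⟩
  exact i := res.exact (i + 1)
  pure := by
    intro N _ _ hN
    obtain ⟨h1, h2, h3⟩ := res.pure N hN
    refine ⟨?_, ?_, fun i => h3 (i + 1)⟩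
    · intro φ ψ h
      ext x
      exact LinearMap.congr_fun h x
    · intro ψ
      constructor
      · intro hd
        obtain ⟨χ, hχ⟩ := (h3 0 ψ).mp hd
        refine ⟨LinearMap.codRestrict _ ψ (fun x => ?_), by ext x; rfl⟩
        exact ⟨χ x, LinearMap.congr_fun hχ x⟩
      · rintro ⟨φ, rfl⟩
        ext x
        obtain ⟨z, hz⟩ := (φ x).2
        simpa [← hz] using (res.exact 0).apply_apply_eq_zero z
end Shift

lemma main_induction (P : Type u) [AddCommGroup P] [Module R P]
    (hP : Module.FinitePresentation R P) (Pr : ProjectiveResolution (ModuleCat.of R P)) :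
    ∀ (n : ℕ) (X : Type u) (iG : AddCommGroup X) (iM : Module R X)
      (res : PureSFpInjectiveResolution R X)
      (f : Pr.complex.X (n+1) →ₗ[R] X),
      f ∘ₗ ((Pr.complex.d (n+2) (n+1)).hom : Pr.complex.X (n+2) →ₗ[R] Pr.complex.X (n+1)) = 0 →
      ∃ g : Pr.complex.X n →ₗ[R] X,
        g ∘ₗ ((Pr.complex.d (n+1) n).hom : Pr.complex.X (n+1) →ₗ[R] Pr.complex.X n) = f := by
  have dCd : ∀ (k : ℕ) (x : Pr.complex.X (k+2)),
      Pr.complex.d (k+1) k (Pr.complex.d (k+2) (k+1) x) = 0 := by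
    intro k x
    exact LinearMap.congr_fun
      (congrArg ModuleCat.Hom.hom (show Pr.complex.d (k+2) (k+1) ≫ Pr.complex.d (k+1) k = 0 from
        HomologicalComplex.d_comp_d _ _ _ _)) x
  have πd : ∀ x : Pr.complex.X 1, ((Pr.π.f 0).hom : Pr.complex.X 0 →ₗ[R] P) (Pr.complex.d 1 0 x) = 0 := by
    intro x
    exact LinearMap.congr_fun
      (congrArg ModuleCat.Hom.hom (show Pr.complex.d 1 0 ≫ Pr.π.f 0 = 0 from Pr.complex_d_comp_π_f_zero)) x
  intro n
  induction n with
  | zero =>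
    intro X iG iM res f hf
    -- lift εf through T0
    obtain ⟨g0, hg0⟩ := (ext_succ_subsingleton_iff P (res.T 0) Pr 0).mp
      (res.sfi 0 P hP 1 le_rfl) (res.ε ∘ₗ f)
      (by rw [LinearMap.comp_assoc, hf, LinearMap.comp_zero])
    -- u = d0 ∘ g0 factors through π₀
    obtain ⟨v, hv⟩ := factor_through_pi P Pr (res.T 1) (res.d 0 ∘ₗ g0) (by
      ext x
      have h1 : g0 (Pr.complex.d 1 0 x) = res.ε (f x) := LinearMap.congr_fun hg0 x
      simp only [LinearMap.comp_apply, LinearMap.zero_apply, h1]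
      exact (res.exact₀).apply_apply_eq_zero (f x))
    have hd1v : res.d 1 ∘ₗ v = 0 := by
      ext p
      obtain ⟨x, rfl⟩ := pi_surjective P Pr p
      have : v (((Pr.π.f 0).hom : Pr.complex.X 0 →ₗ[R] P) x) = res.d 0 (g0 x) :=
        LinearMap.congr_fun hv x
      exact (congrArg (res.d 1) this).trans ((res.exact 0).apply_apply_eq_zero (g0 x))
    -- purity gives w with d0 ∘ w = v
    obtain ⟨w, hw⟩ := ((res.pure P hP).2.2 0 v).mp hd1v
    -- r = g0 - w ∘ π₀ lands in range ε
    set r : Pr.complex.X 0 →ₗ[R] res.T 0 :=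
      g0 - w ∘ₗ ((Pr.π.f 0).hom : Pr.complex.X 0 →ₗ[R] P) with hr
    have hr0 : ∀ x, r x ∈ LinearMap.range res.ε := by
      intro x
      have : res.d 0 (r x) = 0 := by
        have h1 : res.d 0 (w (((Pr.π.f 0).hom : Pr.complex.X 0 →ₗ[R] P) x)) =
            v (((Pr.π.f 0).hom : Pr.complex.X 0 →ₗ[R] P) x) := LinearMap.congr_fun hw _
        have h2 : v (((Pr.π.f 0).hom : Pr.complex.X 0 →ₗ[R] P) x) = res.d 0 (g0 x) :=
          LinearMap.congr_fun hv x
        rw [hr]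
        simp only [LinearMap.sub_apply, LinearMap.comp_apply, map_sub]
        rw [sub_eq_zero]
        exact (h1.trans h2).symm
      rcases (res.exact₀ (r x)).mp this with ⟨y, hy⟩
      exact ⟨y, hy⟩
    obtain ⟨h0, hh0⟩ := lift_of_range_le (proj_complex P Pr 0) res.ε r hr0
    refine ⟨h0, ?_⟩
    apply LinearMap.ext
    intro x
    apply res.mono
    have e1 : res.ε (h0 (Pr.complex.d 1 0 x)) = r (Pr.complex.d 1 0 x) :=
      LinearMap.congr_fun hh0 _
    have e2 : g0 (Pr.complex.d 1 0 x) = res.ε (f x) := LinearMap.congr_fun hg0 x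
    have e4 : w (((Pr.π.f 0).hom : Pr.complex.X 0 →ₗ[R] P) (Pr.complex.d 1 0 x)) = 0 := by
      rw [πd x]; exact map_zero w
    have e3 : r (Pr.complex.d 1 0 x) = res.ε (f x) := by
      rw [hr]
      simp only [LinearMap.sub_apply, LinearMap.comp_apply]
      rw [e2, sub_eq_self]
      exact e4
    exact e1.trans e3
  | succ n ih =>
    intro X iG iM res f hf
    obtain ⟨g, hg⟩ := (ext_succ_subsingleton_iff P (res.T 0) Pr (n+1)).mp
      (res.sfi 0 P hP (n+2) (by omega)) (res.ε ∘ₗ f)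
      (by rw [LinearMap.comp_assoc, hf, LinearMap.comp_zero])
    set d0' : res.T 0 →ₗ[R] ↥(LinearMap.range (res.d 0)) := (res.d 0).rangeRestrict with hd0'
    have hq : (d0' ∘ₗ g) ∘ₗ ((Pr.complex.d (n+2) (n+1)).hom :
        Pr.complex.X (n+2) →ₗ[R] Pr.complex.X (n+1)) = 0 := by
      ext x
      have h1 : g (((Pr.complex.d (n+2) (n+1)).hom : Pr.complex.X (n+2) →ₗ[R] Pr.complex.X (n+1)) x)
          = res.ε (f x) := LinearMap.congr_fun hg x
      simp only [LinearMap.comp_apply, LinearMap.zero_apply, h1]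
      simpa [hd0'] using res.exact₀.apply_apply_eq_zero (f x)
    obtain ⟨h, hh⟩ := ih ↥(LinearMap.range (res.d 0)) inferInstance inferInstance
      res.shift (d0' ∘ₗ g) hq
    obtain ⟨k, hk⟩ := Module.projective_lifting_property (R := R) d0' h
      (res.d 0).surjective_rangeRestrict (h := proj_complex P Pr n)
    set r : Pr.complex.X (n+1) →ₗ[R] res.T 0 :=
      g - k ∘ₗ ((Pr.complex.d (n+1) n).hom : Pr.complex.X (n+1) →ₗ[R] Pr.complex.X n) with hr
    have hr0 : ∀ x, r x ∈ LinearMap.range res.ε := by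
      intro x
      have hzero : res.d 0 (r x) = 0 := by
        have h1 : d0' (k (((Pr.complex.d (n+1) n).hom : Pr.complex.X (n+1) →ₗ[R] Pr.complex.X n) x))
            = h (((Pr.complex.d (n+1) n).hom : Pr.complex.X (n+1) →ₗ[R] Pr.complex.X n) x) :=
          LinearMap.congr_fun hk _
        have h2 : h (((Pr.complex.d (n+1) n).hom : Pr.complex.X (n+1) →ₗ[R] Pr.complex.X n) x)
            = d0' (g x) := LinearMap.congr_fun hh x
        have h3 : d0' (r x) = 0 := by
          rw [hr]
          simp only [LinearMap.sub_apply, LinearMap.comp_apply, map_sub]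
          rw [sub_eq_zero]
          exact (h1.trans h2).symm
        exact congrArg Subtype.val h3
      rcases (res.exact₀ (r x)).mp hzero with ⟨y, hy⟩
      exact ⟨y, hy⟩
    obtain ⟨f', hf'⟩ := lift_of_range_le (proj_complex P Pr (n+1)) res.ε r hr0
    refine ⟨f', ?_⟩
    apply LinearMap.ext
    intro x
    apply res.mono
    have e1 : res.ε (f' (((Pr.complex.d (n+2) (n+1)).hom :
        Pr.complex.X (n+2) →ₗ[R] Pr.complex.X (n+1)) x)) = r (((Pr.complex.d (n+2) (n+1)).hom :
        Pr.complex.X (n+2) →ₗ[R] Pr.complex.X (n+1)) x) := LinearMap.congr_fun hf' _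
    have e2 : g (((Pr.complex.d (n+2) (n+1)).hom : Pr.complex.X (n+2) →ₗ[R] Pr.complex.X (n+1)) x)
        = res.ε (f x) := LinearMap.congr_fun hg x
    have e4 : k (((Pr.complex.d (n+1) n).hom : Pr.complex.X (n+1) →ₗ[R] Pr.complex.X n)
        (((Pr.complex.d (n+2) (n+1)).hom : Pr.complex.X (n+2) →ₗ[R] Pr.complex.X (n+1)) x)) = 0 := by
      rw [show ((Pr.complex.d (n+1) n).hom : Pr.complex.X (n+1) →ₗ[R] Pr.complex.X n)
        (((Pr.complex.d (n+2) (n+1)).hom : Pr.complex.X (n+2) →ₗ[R] Pr.complex.X (n+1)) x)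
        = 0 from dCd n x, map_zero]
    have e3 : r (((Pr.complex.d (n+2) (n+1)).hom :
        Pr.complex.X (n+2) →ₗ[R] Pr.complex.X (n+1)) x) = res.ε (f x) := by
      rw [hr]
      simp only [LinearMap.sub_apply, LinearMap.comp_apply]
      rw [e2, sub_eq_self]
      exact e4
    exact e1.trans e3

lemma sfi_punit : StronglyFpInjective R PUnit.{u+1} := by
  intro P _ _ hP n hn
  obtain ⟨m, rfl⟩ : ∃ m, n = m + 1 := ⟨n - 1, by omega⟩
  obtain ⟨Pr⟩ : Nonempty (ProjectiveResolution (ModuleCat.of R P)) :=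
    HasProjectiveResolution.out
  rw [ext_succ_subsingleton_iff P PUnit.{u+1} Pr m]
  intro f _
  exact ⟨0, LinearMap.ext fun x => Subsingleton.elim _ _⟩

noncomputable def trivialRes (X : Type u) [AddCommGroup X] [Module R X]
    (hX : StronglyFpInjective R X) : PureSFpInjectiveResolution R X where
  T i := match i with | 0 => X | _+1 => PUnit
  grp i := match i with | 0 => inferInstance | _+1 => inferInstance
  mod i := match i with | 0 => inferInstance | _+1 => inferInstance
  ε := LinearMap.id
  d i := 0
  sfi i := match i with | 0 => hX | _+1 => sfi_punit
  mono := fun a b h => h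
  exact₀ := fun y => ⟨fun _ => ⟨y, rfl⟩, fun _ => rfl⟩
  exact := fun i => match i with
    | 0 => fun y => ⟨fun _ => ⟨(0 : X), Subsingleton.elim _ _⟩, fun _ => Subsingleton.elim _ _⟩
    | _+1 => fun y => ⟨fun _ => ⟨PUnit.unit, Subsingleton.elim _ _⟩,
        fun _ => Subsingleton.elim _ _⟩
  pure := by
    intro N _ _ hN
    refine ⟨fun φ ψ h2 => ?_, fun ψ => ⟨fun _ => ⟨ψ, rfl⟩, fun _ => Subsingleton.elim _ _⟩,
      fun i => ?_⟩
    · simpa using h2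
    · match i with
      | 0 => exact fun ψ => ⟨fun _ => ⟨(0 : N →ₗ[R] X), Subsingleton.elim _ _⟩,
          fun _ => Subsingleton.elim _ _⟩
      | _+1 => exact fun ψ => ⟨fun _ => ⟨(0 : N →ₗ[R] PUnit.{u+1}), Subsingleton.elim _ _⟩,
          fun _ => Subsingleton.elim _ _⟩


end Helpers

/-- A left `R`-module `X` is strongly fp-injective if and only if there is a pure exact
sequence `0 → X → T⁰ → T¹ → ⋯` with each `Tⁱ` strongly fp-injective. -/
theorem stronglyFpInjective_iff_pureSFpInjectiveResolution
    (R : Type u) [Ring R] (X : Type u) [AddCommGroup X] [Module R X] :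
    StronglyFpInjective R X ↔ Nonempty (PureSFpInjectiveResolution R X) := by
  constructor
  · intro hX
    exact ⟨trivialRes X hX⟩
  · rintro ⟨res⟩ P _ _ hP n hn
    obtain ⟨m, rfl⟩ : ∃ m, n = m + 1 := ⟨n - 1, by omega⟩
    obtain ⟨Pr⟩ : Nonempty (ProjectiveResolution (ModuleCat.of R P)) :=
      HasProjectiveResolution.out
    rw [ext_succ_subsingleton_iff P X Pr m]
    intro f hf
    exact main_induction P hP Pr m X _ _ res f hf
end

section
/- Given a commutative diagram of R-modules with exact split rows 0 → X →^μ Y → Z → 0 and 0 → L →^ν M → N → 0 and vertical maps f : X → L, g : Y → M, h : Z → N, suppose r : Y → X satisfies r∘μ = id_X, h is a monomorphism, and every homomorphism Z → L extends along h to a homomorphism N → L. Then there exists s : M → L with s∘ν = id_L and f∘r = s∘g. -/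
universe u

/-- Given a commutative diagram of `R`-modules with split exact rows
`0 → X →μ Y →p Z → 0` and `0 → L →ν M →q N → 0` and vertical maps `f, g, h`, if
`r ∘ μ = id`, `h` is injective, and every homomorphism `Z → L` extends along `h` to a
homomorphism `N → L`, then there is `s : M → L` with `s ∘ ν = id` and `f ∘ r = s ∘ g`. -/
theorem exists_left_inverse_of_split_diagram
    (R : Type u) [Ring R] (X Y Z L M N : Type u)
    [AddCommGroup X] [Module R X] [AddCommGroup Y] [Module R Y] [AddCommGroup Z] [Module R Z]
    [AddCommGroup L] [Module R L] [AddCommGroup M] [Module R M] [AddCommGroup N] [Module R N]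
    (μ : X →ₗ[R] Y) (p : Y →ₗ[R] Z) (ν : L →ₗ[R] M) (q : M →ₗ[R] N)
    (f : X →ₗ[R] L) (g : Y →ₗ[R] M) (h : Z →ₗ[R] N)
    (hμ : Function.Injective μ) (hp : Function.Surjective p) (hμp : Function.Exact μ p)
    (hν : Function.Injective ν) (hq : Function.Surjective q) (hνq : Function.Exact ν q)
    (hcomm₁ : g ∘ₗ μ = ν ∘ₗ f) (hcomm₂ : h ∘ₗ p = q ∘ₗ g)
    (r : Y →ₗ[R] X) (hr : r ∘ₗ μ = LinearMap.id)
    (t : M →ₗ[R] L) (ht : t ∘ₗ ν = LinearMap.id)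
    (hmono : Function.Injective h)
    (hext : ∀ k : Z →ₗ[R] L, ∃ k' : N →ₗ[R] L, k' ∘ₗ h = k) :
    ∃ s : M →ₗ[R] L, s ∘ₗ ν = LinearMap.id ∧ f ∘ₗ r = s ∘ₗ g := by
  -- the defect d := f ∘ r - t ∘ g vanishes on the image of μ
  set d : Y →ₗ[R] L := f ∘ₗ r - t ∘ₗ g with hd
  have hker : LinearMap.ker p ≤ LinearMap.ker d := by
    intro y hy
    rw [LinearMap.mem_ker] at hy
    obtain ⟨x, hx⟩ := (hμp y).mp hy
    have h1 : d (μ x) = 0 := by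
      simp only [hd, LinearMap.sub_apply, LinearMap.comp_apply]
      have h2 : r (μ x) = x := congrFun (congrArg DFunLike.coe hr) x
      have h3 : g (μ x) = ν (f x) := congrFun (congrArg DFunLike.coe hcomm₁) x
      have h4 : t (ν (f x)) = f x := congrFun (congrArg DFunLike.coe ht) (f x)
      rw [h2, h3, h4, sub_self]
    rw [LinearMap.mem_ker, ← hx]
    exact h1
  -- factor d through p
  let e := p.quotKerEquivOfSurjective hp
  let k : Z →ₗ[R] L := (LinearMap.ker p).liftQ d hker ∘ₗ (e.symm : Z →ₗ[R] Y ⧸ LinearMap.ker p)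
  have hk : k ∘ₗ p = d := by
    ext y
    have : e.symm (p y) = Submodule.Quotient.mk y := by
      apply e.injective
      simp [e, LinearMap.quotKerEquivOfSurjective]
    simp only [LinearMap.comp_apply, k, LinearEquiv.coe_coe, this]
    rfl
  obtain ⟨k', hk'⟩ := hext k
  refine ⟨t + k' ∘ₗ q, ?_, ?_⟩
  · ext l
    have hqν : q (ν l) = 0 := (hνq (ν l)).mpr ⟨l, rfl⟩
    have h4 : t (ν l) = l := congrFun (congrArg DFunLike.coe ht) l
    simp [hqν, h4]
  · ext y
    have h5 : q (g y) = h (p y) := (congrFun (congrArg DFunLike.coe hcomm₂) y).symm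
    have h6 : k' (h (p y)) = k (p y) := congrFun (congrArg DFunLike.coe hk') (p y)
    have h7 : k (p y) = d y := congrFun (congrArg DFunLike.coe hk) y
    simp only [LinearMap.comp_apply, LinearMap.add_apply, h5, h6, h7, hd,
      LinearMap.sub_apply, LinearMap.comp_apply]
    abel
end

section
/- Every fp-injective left R-module whose strongly fp-injective dimension is at most 1 is strongly fp-injective. -/
open CategoryTheory

universe u

section Aux
open CategoryTheory Limits
variable {R : Type u} [Ring R]

/-- Postcomposition as a morphism of `ℤ`-modules of homs. -/
noncomputable def postMap (A : ModuleCat.{u} R) {Y Z : ModuleCat.{u} R} (f : Y ⟶ Z) :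
    ModuleCat.of ℤ (A ⟶ Y) ⟶ ModuleCat.of ℤ (A ⟶ Z) :=
  ModuleCat.ofHom
    { toFun := fun g => g ≫ f
      map_add' := fun g g' => Preadditive.add_comp _ _ _ _ _ _
      map_smul' := fun n g => by simp [Preadditive.zsmul_comp] }

/-- Postcomposition map on the yoneda cochain complex. -/
noncomputable def postYo (X : ChainComplex (ModuleCat.{u} R) ℕ)
    {Y Z : ModuleCat.{u} R} (f : Y ⟶ Z) :
    X.linearYonedaObj ℤ Y ⟶ X.linearYonedaObj ℤ Z where
  f i := postMap (X.X i) f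
  comm' := fun i j hij => by
    ext g : 2
    simp only [ModuleCat.ofHom, Linear.leftComp, postMap]
    exact (Category.assoc (X.d j i) (g : X.X i ⟶ Y) f).symm

lemma postMap_comp_zero (A : ModuleCat.{u} R) {Y Z W : ModuleCat.{u} R}
    (f : Y ⟶ Z) (g : Z ⟶ W) (h : f ≫ g = 0) :
    postMap A f ≫ postMap A g = 0 := by
  ext φ : 2
  show (φ ≫ f) ≫ g = 0
  rw [Category.assoc, h, Limits.comp_zero]

lemma shortExact_postMap (A : ModuleCat.{u} R) [Projective A]
    {Y Z W : ModuleCat.{u} R} (f : Y ⟶ Z) (g : Z ⟶ W)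
    (hf : Function.Injective f) (hg : Function.Surjective g)
    (hfg : Function.Exact f g) (hzero : postMap A f ≫ postMap A g = 0) :
    (ShortComplex.mk (postMap A f) (postMap A g) hzero).ShortExact := by
  have hm : Mono (ShortComplex.mk (postMap A f) (postMap A g) hzero).f := by
    rw [ModuleCat.mono_iff_injective]
    intro φ φ' h
    let ψ : A ⟶ Y := φ
    let ψ' : A ⟶ Y := φ'
    suffices hsuff : ψ = ψ' from hsuff
    have h2 : ψ ≫ f = ψ' ≫ f := h
    ext x
    exact hf (ConcreteCategory.congr_hom h2 x)
  have he : Epi (ShortComplex.mk (postMap A f) (postMap A g) hzero).g := by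
    rw [ModuleCat.epi_iff_surjective]
    intro h
    let H : A ⟶ W := h
    have hepi : Epi g := (ModuleCat.epi_iff_surjective g).2 hg
    obtain ⟨φ, hφ⟩ := Projective.factors H g
    exact ⟨φ, hφ⟩
  refine { exact := ?_, mono_f := hm, epi_g := he }
  rw [ShortComplex.moduleCat_exact_iff]
  intro φ₀ hφ₀
  let Φ : A ⟶ Z := φ₀
  have hφ : Φ ≫ g = 0 := hφ₀
  have hmem : ∀ x, Φ x ∈ LinearMap.range f.hom := by
    intro x
    have hx : g (Φ x) = 0 := ConcreteCategory.congr_hom hφ x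
    obtain ⟨y, hy⟩ := (hfg _).1 hx
    exact ⟨y, hy⟩
  let e := LinearEquiv.ofInjective f.hom hf
  let φ' : A ⟶ Y :=
    ModuleCat.ofHom (e.symm.toLinearMap.comp (LinearMap.codRestrict _ Φ.hom hmem))
  have key : φ' ≫ f = Φ := by
    ext x
    show f (φ' x) = Φ x
    have h1 : f (φ' x) = (e (φ' x) : Z) := (LinearEquiv.ofInjective_apply _ _).symm
    rw [h1]
    show ((e (e.symm ⟨Φ x, hmem x⟩) : LinearMap.range f.hom) : Z) = _
    rw [LinearEquiv.apply_symm_apply]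
  exact ⟨φ', key⟩

lemma subsingleton_of_isZero_s14 {S : Type*} [Ring S] {Z : ModuleCat S} (h : IsZero Z) :
    Subsingleton Z :=
  ⟨fun x y => by
    have h0 : (𝟙 Z : Z ⟶ Z) = 0 := h.eq_of_src _ _
    calc x = (𝟙 Z : Z ⟶ Z) x := rfl
    _ = (0 : Z ⟶ Z) x := by rw [h0]
    _ = (𝟙 Z : Z ⟶ Z) y := by rw [h0]; rfl
    _ = y := rfl⟩

end Aux

/-- Every fp-injective left `R`-module of strongly fp-injective dimension at most `1`
(i.e. admitting an exact sequence `0 → M → J⁰ → J¹ → 0` with `J⁰, J¹` strongly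
fp-injective) is strongly fp-injective. -/
theorem stronglyFpInjective_of_fpInjective_of_dim_le_one
    (R : Type u) [Ring R] (M J₀ J₁ : Type u)
    [AddCommGroup M] [Module R M] [AddCommGroup J₀] [Module R J₀] [AddCommGroup J₁] [Module R J₁]
    (hM : FpInjective R M)
    (α : M →ₗ[R] J₀) (β : J₀ →ₗ[R] J₁)
    (hα : Function.Injective α) (hβ : Function.Surjective β) (hαβ : Function.Exact α β)
    (h₀ : StronglyFpInjective R J₀) (h₁ : StronglyFpInjective R J₁) :
    StronglyFpInjective R M := by
  intro P _ _ hP n hn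
  obtain ⟨π⟩ := (inferInstance : HasProjectiveResolution (ModuleCat.of R P)).out
  let αm : ModuleCat.of R M ⟶ ModuleCat.of R J₀ := ModuleCat.ofHom α
  let βm : ModuleCat.of R J₀ ⟶ ModuleCat.of R J₁ := ModuleCat.ofHom β
  have hab : αm ≫ βm = 0 := by
    ext x
    exact hαβ.apply_apply_eq_zero x
  let T : ShortComplex (CochainComplex (ModuleCat.{u} ℤ) ℕ) :=
    ShortComplex.mk (postYo π.complex αm) (postYo π.complex βm) (by
      ext i : 1
      simp only [HomologicalComplex.comp_f, postYo]
      exact postMap_comp_zero _ _ _ hab)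
  have hT : T.ShortExact := by
    apply HomologicalComplex.shortExact_of_degreewise_shortExact
    intro i
    have := π.projective i
    exact shortExact_postMap (π.complex.X i) αm βm hα hβ hαβ (postMap_comp_zero _ _ _ hab)
  obtain _|n := n
  · omega
  obtain _|m := n
  · exact hM P hP
  have rel : (ComplexShape.up ℕ).Rel (m+1) (m+2) := by simp
  have hx := hT.homology_exact₁ (m+1) (m+2) rel
  have z1 : Limits.IsZero (T.X₃.homology (m+1)) := by
    have hs : Subsingleton (((Ext ℤ (ModuleCat.{u} R) (m+1)).obj
        (Opposite.op (ModuleCat.of R P))).obj (ModuleCat.of R J₁)) := h₁ P hP (m+1) (by omega)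
    exact Limits.IsZero.of_iso (ModuleCat.isZero_of_subsingleton _)
      (π.isoExt (m+1) (ModuleCat.of R J₁)).symm
  have z3 : Limits.IsZero (T.X₂.homology (m+2)) := by
    have hs : Subsingleton (((Ext ℤ (ModuleCat.{u} R) (m+2)).obj
        (Opposite.op (ModuleCat.of R P))).obj (ModuleCat.of R J₀)) := h₀ P hP (m+2) (by omega)
    exact Limits.IsZero.of_iso (ModuleCat.isZero_of_subsingleton _)
      (π.isoExt (m+2) (ModuleCat.of R J₀)).symm
  have zmid : Limits.IsZero (T.X₁.homology (m+2)) :=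
    hx.isZero_X₂ (z1.eq_of_src _ _) (z3.eq_of_tgt _ _)
  exact subsingleton_of_isZero_s14 (Limits.IsZero.of_iso zmid (π.isoExt (m+2) (ModuleCat.of R M)))
end

section
/- The class of Gorenstein strongly fp-injective left R-modules is closed under arbitrary direct products. -/
open CategoryTheory

universe u

/-- A left `R`-module `N` is Gorenstein strongly fp-injective if it is a cycle module of
an acyclic complex of injective modules which stays acyclic after applying `Hom_R(J, -)`
for every strongly fp-injective module `J`. -/
def GorensteinSFpInjective (R : Type u) [Ring R] (N : Type u)
    [AddCommGroup N] [Module R N] : Prop :=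
  ∃ C : CochainComplex (ModuleCat.{u} R) ℤ,
    (∀ n : ℤ, Module.Injective R (C.X n)) ∧
    (∀ n : ℤ, C.ExactAt n) ∧
    (∀ (J : Type u) [AddCommGroup J] [Module R J], StronglyFpInjective R J →
      ∀ (n : ℤ) (φ : (ModuleCat.of R J : ModuleCat.{u} R) ⟶ C.X n), φ ≫ C.d n (n + 1) = 0 →
        ∃ ψ : (ModuleCat.of R J : ModuleCat.{u} R) ⟶ C.X (n - 1), ψ ≫ C.d (n - 1) n = φ) ∧
    ∃ n : ℤ, Nonempty (N ≃ₗ[R] LinearMap.ker (C.d n (n + 1)).hom)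

private theorem module_injective_pi {R : Type u} [Ring R] {ι : Type u} {M : ι → Type u}
    [∀ i, AddCommGroup (M i)] [∀ i, Module R (M i)] (h : ∀ i, Module.Injective R (M i)) :
    Module.Injective R (∀ i, M i) := by
  constructor
  intro X Y _ _ _ _ f hf g
  have : ∀ i, ∃ L : Y →ₗ[R] M i, ∀ x, L (f x) = (LinearMap.proj i ∘ₗ g) x :=
    fun i => (h i).out f hf _
  choose L hL using this
  exact ⟨LinearMap.pi L, fun x => funext fun i => hL i x⟩

private noncomputable def kerPiEquiv {R : Type u} [Ring R] {ι : Type u}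
    {M N : ι → Type u} [∀ i, AddCommGroup (M i)] [∀ i, Module R (M i)]
    [∀ i, AddCommGroup (N i)] [∀ i, Module R (N i)] (f : ∀ i, M i →ₗ[R] N i) :
    (∀ i, LinearMap.ker (f i)) ≃ₗ[R]
      LinearMap.ker (LinearMap.pi fun i => (f i) ∘ₗ LinearMap.proj i) where
  toFun x := ⟨fun i => (x i).1, by
    simp only [LinearMap.mem_ker]
    funext i
    simpa using (x i).2⟩
  map_add' x y := rfl
  map_smul' r x := rfl
  invFun y := fun i => ⟨y.1 i, by
    have h := y.2
    simp only [LinearMap.mem_ker] at h ⊢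
    have := congrFun h i
    simpa using this⟩
  left_inv x := rfl
  right_inv y := rfl

/-- The class of Gorenstein strongly fp-injective left `R`-modules is closed under
arbitrary direct products. -/
theorem gorensteinSFpInjective_pi
    (R : Type u) [Ring R] (ι : Type u) (G : ι → Type u)
    [∀ i, AddCommGroup (G i)] [∀ i, Module R (G i)]
    (hG : ∀ i, GorensteinSFpInjective R (G i)) :
    GorensteinSFpInjective R (∀ i, G i) := by
  choose C h using hG
  have hinj : ∀ i n, Module.Injective R ((C i).X n) := fun i => (h i).1
  have hexact : ∀ i n, (C i).ExactAt n := fun i => (h i).2.1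
  have hlift := fun i => (h i).2.2.1
  choose k hiso using fun i => (h i).2.2.2
  -- the product complex
  let D : CochainComplex (ModuleCat.{u} R) ℤ :=
    { X := fun n => ModuleCat.of R (∀ i, ((C i).X (n + k i) : Type u))
      d := fun n m =>
        ModuleCat.ofHom (LinearMap.pi fun i => ((C i).d (n + k i) (m + k i)).hom ∘ₗ LinearMap.proj i)
      shape := by
        intro n m hnm
        have : ∀ i, (C i).d (n + k i) (m + k i) = 0 := by
          intro i
          apply (C i).shape
          simp only [ComplexShape.up_Rel] at hnm ⊢
          omega
        ext x i
        show ((C i).d (n + k i) (m + k i)).hom (x i) = 0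
        rw [this i]
        rfl
      d_comp_d' := by
        intro a b c _ _
        ext x i
        show ((C i).d (b + k i) (c + k i)).hom
          (((C i).d (a + k i) (b + k i)).hom (x i)) = 0
        have := (C i).d_comp_d (a + k i) (b + k i) (c + k i)
        exact congrFun (congrArg (fun (f : _ ⟶ _) => (ModuleCat.Hom.hom f : _ → _)) this) (x i) }
  refine ⟨D, ?_, ?_, ?_, ?_⟩
  · -- injectivity
    intro n
    exact module_injective_pi (fun i => hinj i (n + k i))
  · -- exactness
    intro n
    rw [HomologicalComplex.exactAt_iff' D (n-1) n (n+1)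
      (by rw [CochainComplex.prev]) (by rw [CochainComplex.next]),
      ShortComplex.moduleCat_exact_iff]
    intro x hx
    have hx' : ∀ i, ((C i).d (n + k i) ((n+1) + k i)).hom (x i) = 0 := by
      intro i
      exact congrFun hx i
    have key : ∀ i, ∃ y : ((C i).X ((n-1) + k i) : Type u),
        ((C i).d ((n-1) + k i) (n + k i)).hom y = x i := by
      intro i
      have he := hexact i (n + k i)
      rw [HomologicalComplex.exactAt_iff' (C i) ((n-1) + k i) (n + k i) ((n+1) + k i)
        (by rw [CochainComplex.prev]; ring) (by rw [CochainComplex.next]; ring),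
        ShortComplex.moduleCat_exact_iff] at he
      exact he (x i) (hx' i)
    choose y hy using key
    exact ⟨y, funext fun i => hy i⟩
  · -- lifting property
    intro J _ _ hJ n φ hφ
    have key : ∀ i, ∃ ψ : (ModuleCat.of R J : ModuleCat.{u} R) ⟶ (C i).X ((n-1) + k i),
        ψ ≫ (C i).d ((n-1) + k i) (n + k i) =
          ModuleCat.ofHom (LinearMap.proj i ∘ₗ
            (φ).hom) := by
      intro i
      have e : (n - 1) + k i = (n + k i) - 1 := by ring
      rw [e]
      apply hlift i J hJ (n + k i)
      ext x
      have h0 : (D.d n (n+1)).hom ((φ).hom x) = 0 :=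
        congrFun (congrArg (fun (f : _ ⟶ _) => (ModuleCat.Hom.hom f : _ → _)) hφ) x
      have h1 := congrFun h0 i
      have e2 : (n + k i) + 1 = (n + 1) + k i := by ring
      show ((C i).d (n + k i) ((n + k i) + 1)).hom ((φ).hom x i) = 0
      rw [e2]
      exact h1
    choose ψ hψ using key
    refine ⟨ModuleCat.ofHom (LinearMap.pi fun i =>
      (ψ i).hom), ?_⟩
    ext x i
    exact congrFun (congrArg (fun (f : _ ⟶ _) => (ModuleCat.Hom.hom f : _ → _)) (hψ i)) x
  · -- kernel identification
    refine ⟨0, ?_⟩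
    have hiso' : ∀ i, Nonempty (G i ≃ₗ[R]
        LinearMap.ker (((C i).d ((0:ℤ) + k i) ((0:ℤ) + 1 + k i))).hom) := by
      intro i
      have e1 : (0:ℤ) + k i = k i := by ring
      have e2 : (0:ℤ) + 1 + k i = k i + 1 := by ring
      rw [e1, e2]
      exact hiso i
    have ci := fun i => Classical.choice (hiso' i)
    refine ⟨?_⟩
    show (∀ i, G i) ≃ₗ[R] LinearMap.ker (LinearMap.pi fun i =>
      ((C i).d ((0:ℤ) + k i) ((0:ℤ) + 1 + k i)).hom ∘ₗ LinearMap.proj i)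
    exact (LinearEquiv.piCongrRight ci).trans
      (kerPiEquiv fun i => ((C i).d ((0:ℤ) + k i) ((0:ℤ) + 1 + k i)).hom)
end

section
/- Every Gorenstein strongly fp-injective left R-module is Gorenstein injective. -/
open CategoryTheory

universe u

/-- A left `R`-module `N` is Gorenstein injective if it is a cycle module of an acyclic
complex of injective modules which stays acyclic after applying `Hom_R(I, -)` for every
injective module `I`. -/
def GorensteinInjective (R : Type u) [Ring R] (N : Type u)
    [AddCommGroup N] [Module R N] : Prop :=
  ∃ C : CochainComplex (ModuleCat.{u} R) ℤ,
    (∀ n : ℤ, Module.Injective R (C.X n)) ∧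
    (∀ n : ℤ, C.ExactAt n) ∧
    (∀ (I : Type u) [AddCommGroup I] [Module R I], Module.Injective R I →
      ∀ (n : ℤ) (φ : (ModuleCat.of R I : ModuleCat.{u} R) ⟶ C.X n), φ ≫ C.d n (n + 1) = 0 →
        ∃ ψ : (ModuleCat.of R I : ModuleCat.{u} R) ⟶ C.X (n - 1), ψ ≫ C.d (n - 1) n = φ) ∧
    ∃ n : ℤ, Nonempty (N ≃ₗ[R] LinearMap.ker (C.d n (n + 1)).hom)


/-! Injective modules are strongly fp-injective: `Ext^{n+1}(X, I)` is the homology of `Hom(P•, I)`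
for a projective resolution `P•` of `X`, and `Hom(-, I)` preserves exactness when `I` is injective.
Hence the test class of the Gorenstein injective condition lies inside that of the Gorenstein
strongly fp-injective one, and the same complex of injectives witnesses both. -/

open Limits in
theorem isZero_Ext_succ_of_injective {S : Type*} [Ring S] {C : Type*} [Category* C] [Abelian C]
    [Linear S C] [EnoughProjectives C] (X Y : C) [Injective Y] (n : ℕ) :
    IsZero (((Ext S C (n + 1)).obj (Opposite.op X)).obj Y) := by
  let P := ProjectiveResolution.of X
  refine IsZero.of_iso ?_ (P.isoExt (n + 1) Y)
  rw [← HomologicalComplex.exactAt_iff_isZero_homology,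
    HomologicalComplex.exactAt_iff' _ n (n + 1) (n + 2) (by simp) (by simp),
    ShortComplex.moduleCat_exact_iff]
  intro φ hφ
  exact ⟨(P.exact_succ n).descToInjective φ hφ, (P.exact_succ n).comp_descToInjective φ hφ⟩

theorem stronglyFpInjective_of_injective {R : Type u} [Ring R] (I : Type u) [AddCommGroup I]
    [Module R I] [Module.Injective R I] : StronglyFpInjective R I := by
  intro P _ _ _ n hn
  obtain ⟨m, rfl⟩ := Nat.exists_eq_add_of_le' hn
  have := Module.injective_object_of_injective_module (R := R) (M := I)
  exact ModuleCat.subsingleton_of_isZero (isZero_Ext_succ_of_injective _ _ m)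

/-- Every Gorenstein strongly fp-injective left `R`-module is Gorenstein injective. -/
theorem gorensteinInjective_of_gorensteinSFpInjective
    (R : Type u) [Ring R] (N : Type u) [AddCommGroup N] [Module R N]
    (h : GorensteinSFpInjective R N) : GorensteinInjective R N := by
  obtain ⟨C, hinj, hex, hlift, n, e⟩ := h
  exact ⟨C, hinj, hex, fun I _ _ _ => hlift I (stronglyFpInjective_of_injective I), n, e⟩
end
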